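/- arXiv:1711.02458 — 4 statements merged into one kernel-verified Lean document; each statement's English description precedes it below -/
import Mathlib

section
/- (Appendix A(ii).) Let N ≥ 1 and let p = (p_1, …, p_N) be a probability vector with pairwise distinct positive entries. For α > 0 define I_p(α) := (N−1)! ∫_{T} (Σ_{j=1}^N p_j λ_j)^α dλ_1 ⋯ dλ_{N−1}, where T = {(λ_1,…,λ_{N−1}) ∈ ℝ^{N−1} : λ_j ≥ 0, Σ_{j<N} λ_j ≤ 1} and λ_N := 1 − Σ_{j<N} λ_j. Then the derivative of I_p at α = 1 satisfies I_p′(1) = −(1/N)(H_N − 1 + Q(p)); equivalently, (N−1)! ∫_{T} (Σ_j p_j λ_j) ln(Σ_j p_j λ_j) dλ = −(1/N)(H_N − 1 + Q(p)). -/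
open MeasureTheory Real

/-- Shannon entropy of a vector, with the convention `0 * log 0 = 0`. -/
noncomputable def shannonEntropy {N : ℕ} (p : Fin N → ℝ) : ℝ :=
  ∑ i, Real.negMulLog (p i)

/-- Subentropy of a vector (well defined when the entries are pairwise distinct). -/
noncomputable def subentropy {N : ℕ} (p : Fin N → ℝ) : ℝ :=
  -∑ i, p i ^ N * Real.log (p i) / ∏ j ∈ Finset.univ.erase i, (p i - p j)

/-- A matrix is bi-stochastic if it has nonnegative entries and all row and column sums are 1. -/
def IsBistochastic {N : ℕ} (B : Matrix (Fin N) (Fin N) ℝ) : Prop :=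
  (∀ i j, 0 ≤ B i j) ∧ (∀ i, ∑ j, B i j = 1) ∧ (∀ j, ∑ i, B i j = 1)

/-- Parametrization of the probability simplex `Δ_{N-1}` by the solid simplex in `ℝ^{N-1}`:
`x ↦ (x_1, …, x_{N-1}, 1 - ∑_{j<N} x_j)`. -/
noncomputable def simplexMap (N : ℕ) (x : Fin (N - 1) → ℝ) : Fin N → ℝ :=
  fun i => if h : (i : ℕ) < N - 1 then x ⟨i, h⟩ else 1 - ∑ j, x j

/-- The solid simplex `T = {x ∈ ℝ^{N-1} : x_j ≥ 0, ∑_j x_j ≤ 1}`. -/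
def solidSimplex (N : ℕ) : Set (Fin (N - 1) → ℝ) :=
  {x | (∀ j, 0 ≤ x j) ∧ ∑ j, x j ≤ 1}

/-- Integral of a function on the probability simplex with respect to the uniform
probability measure `μ_N`, realized as `(N-1)!` times the Lebesgue integral over the
solid simplex of the parametrized integrand. -/
noncomputable def simplexIntegral (N : ℕ) (f : (Fin N → ℝ) → ℝ) : ℝ :=
  ((N - 1).factorial : ℝ) * ∫ x in solidSimplex N, f (simplexMap N x)

/-- The `N`-th harmonic number `H_N = ∑_{j=1}^N 1/j`. -/
noncomputable def harmonicNum (N : ℕ) : ℝ := ∑ j ∈ Finset.range N, (1 : ℝ) / (j + 1)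



section Aux
open Finset


noncomputable def hpoly : ℕ → List ℝ → ℝ
  | 0, _ => 1
  | _+1, [] => 0
  | k+1, (a :: l) => a * hpoly k (a :: l) + hpoly (k+1) l

lemma hpoly_singleton (k : ℕ) (x : ℝ) : hpoly k [x] = x ^ k := by
  induction k with
  | zero => simp [hpoly]
  | succ k ih => rw [hpoly, ih, hpoly]; ring

lemma hpoly_one (l : List ℝ) : hpoly 1 l = l.sum := by
  induction l with
  | nil => simp [hpoly]
  | cons a t ih => rw [hpoly, hpoly, ih]; simp

lemma hpoly_cons (k : ℕ) (a : ℝ) (l : List ℝ) :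
    hpoly (k+1) (a :: l) = a * hpoly k (a :: l) + hpoly (k+1) l := by
  rw [hpoly]

lemma hpoly_sub (k : ℕ) (a b : ℝ) (t : List ℝ) :
    hpoly (k+1) (a :: t) - hpoly (k+1) (b :: t) = (a - b) * hpoly k (a :: b :: t) := by
  induction k with
  | zero =>
    simp only [hpoly]
    ring
  | succ k ih =>
    rw [hpoly_cons (k+1) a t, hpoly_cons (k+1) b t, hpoly_cons k a (b :: t)]
    linear_combination a * ih

/-- Divided-difference style sum over a finite index set. -/
noncomputable def DDF {ι : Type*} [DecidableEq ι] (v : ι → ℝ) (F : ℝ → ℝ) (S : Finset ι) : ℝ :=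
  ∑ i ∈ S, F (v i) / ∏ j ∈ S.erase i, (v i - v j)

section DDF
variable {ι : Type*} [DecidableEq ι] (v : ι → ℝ) (F : ℝ → ℝ)

lemma prod_erase_ne_zero {S : Finset ι} (hinj : Set.InjOn v S) {i : ι} (hi : i ∈ S) :
    ∏ j ∈ S.erase i, (v i - v j) ≠ 0 := by
  refine Finset.prod_ne_zero_iff.2 fun j hj => ?_
  have hji := Finset.ne_of_mem_erase hj
  have hjS := Finset.mem_of_mem_erase hj
  exact sub_ne_zero.2 fun h => hji.symm (hinj hi hjS h)

lemma prod_erase_erase {S : Finset ι} {i x : ι} (hi : i ∈ S) (hx : x ∈ S) (hix : i ≠ x) :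
    (∏ j ∈ (S.erase x).erase i, (v i - v j)) * (v i - v x) = ∏ j ∈ S.erase i, (v i - v j) := by
  rw [Finset.erase_right_comm]
  rw [mul_comm, ← Finset.mul_prod_erase (S.erase i) (fun j => v i - v j)
    (Finset.mem_erase.2 ⟨hix.symm, hx⟩)]

lemma DDF_rec {S : Finset ι} {a b : ι} (ha : a ∈ S) (hb : b ∈ S) (hab : a ≠ b)
    (hinj : Set.InjOn v S) :
    DDF v F S = (DDF v F (S.erase b) - DDF v F (S.erase a)) / (v a - v b) := by
  have hvab : v a - v b ≠ 0 := sub_ne_zero.2 fun h => hab (hinj ha hb h)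
  rw [eq_div_iff hvab]
  have hbA : b ∈ S.erase a := Finset.mem_erase.2 ⟨hab.symm, hb⟩
  have haB : a ∈ S.erase b := Finset.mem_erase.2 ⟨hab, ha⟩
  -- expand sums
  have expS : DDF v F S = F (v a) / ∏ j ∈ S.erase a, (v a - v j)
      + (F (v b) / ∏ j ∈ S.erase b, (v b - v j)
        + ∑ i ∈ (S.erase a).erase b, F (v i) / ∏ j ∈ S.erase i, (v i - v j)) := by
    rw [DDF, ← Finset.add_sum_erase _ _ ha]
    congr 1
    rw [← Finset.add_sum_erase _ _ hbA]
  have expB : DDF v F (S.erase b) = F (v a) / ∏ j ∈ (S.erase b).erase a, (v a - v j)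
      + ∑ i ∈ (S.erase b).erase a, F (v i) / ∏ j ∈ (S.erase b).erase i, (v i - v j) := by
    rw [DDF, ← Finset.add_sum_erase _ _ haB]
  have expA : DDF v F (S.erase a) = F (v b) / ∏ j ∈ (S.erase a).erase b, (v b - v j)
      + ∑ i ∈ (S.erase a).erase b, F (v i) / ∏ j ∈ (S.erase a).erase i, (v i - v j) := by
    rw [DDF, ← Finset.add_sum_erase _ _ hbA]
  rw [expS, expB, expA]
  rw [Finset.erase_right_comm (a := b) (b := a)]
  have hsum : (∑ i ∈ (S.erase a).erase b, F (v i) / ∏ j ∈ S.erase i, (v i - v j)) * (v a - v b)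
      = (∑ i ∈ (S.erase a).erase b, F (v i) / ∏ j ∈ (S.erase b).erase i, (v i - v j))
        - ∑ i ∈ (S.erase a).erase b, F (v i) / ∏ j ∈ (S.erase a).erase i, (v i - v j) := by
    rw [← Finset.sum_sub_distrib, Finset.sum_mul]
    refine Finset.sum_congr rfl fun i hi => ?_
    have hib : i ≠ b := Finset.ne_of_mem_erase hi
    have hia : i ≠ a := Finset.ne_of_mem_erase (Finset.mem_of_mem_erase hi)
    have hiS : i ∈ S := Finset.mem_of_mem_erase (Finset.mem_of_mem_erase hi)
    have e1 : (∏ j ∈ (S.erase b).erase i, (v i - v j)) * (v i - v b)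
        = ∏ j ∈ S.erase i, (v i - v j) := prod_erase_erase v hiS hb hib
    have e2 : (∏ j ∈ (S.erase a).erase i, (v i - v j)) * (v i - v a)
        = ∏ j ∈ S.erase i, (v i - v j) := prod_erase_erase v hiS ha hia
    have n1 : (∏ j ∈ (S.erase b).erase i, (v i - v j)) ≠ 0 :=
      prod_erase_ne_zero v (hinj.mono (Finset.erase_subset _ _)) (Finset.mem_erase.2 ⟨hib, hiS⟩)
    have n2 : (∏ j ∈ (S.erase a).erase i, (v i - v j)) ≠ 0 :=
      prod_erase_ne_zero v (hinj.mono (Finset.erase_subset _ _)) (Finset.mem_erase.2 ⟨hia, hiS⟩)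
    have nib : v i - v b ≠ 0 := sub_ne_zero.2 fun h => hib (hinj hiS hb h)
    have nia : v i - v a ≠ 0 := sub_ne_zero.2 fun h => hia (hinj hiS ha h)
    have e12 : (∏ j ∈ (S.erase b).erase i, (v i - v j)) * (v i - v b)
        = (∏ j ∈ (S.erase a).erase i, (v i - v j)) * (v i - v a) := e1.trans e2.symm
    have g_eq : F (v i) / (∏ j ∈ (S.erase b).erase i, (v i - v j))
        = F (v i) * (v i - v b) / ((∏ j ∈ (S.erase b).erase i, (v i - v j)) * (v i - v b)) := by
      rw [mul_div_mul_right _ _ nib]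
    have h_eq : F (v i) / (∏ j ∈ (S.erase a).erase i, (v i - v j))
        = F (v i) * (v i - v a) / ((∏ j ∈ (S.erase b).erase i, (v i - v j)) * (v i - v b)) := by
      rw [e12, mul_div_mul_right _ _ nia]
    rw [← e1, g_eq, h_eq, div_sub_div_same, div_mul_eq_mul_div]
    congr 1
    ring
  have ea : (∏ j ∈ (S.erase b).erase a, (v a - v j)) * (v a - v b)
      = ∏ j ∈ S.erase a, (v a - v j) := prod_erase_erase v ha hb hab
  rw [Finset.erase_right_comm (a := b) (b := a)] at ea
  have eb : (∏ j ∈ (S.erase a).erase b, (v b - v j)) * (v b - v a)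
      = ∏ j ∈ S.erase b, (v b - v j) := prod_erase_erase v hb ha hab.symm
  have na : (∏ j ∈ (S.erase a).erase b, (v a - v j)) ≠ 0 := by
    rw [Finset.erase_right_comm (a := a) (b := b)]
    exact prod_erase_ne_zero v (hinj.mono (Finset.erase_subset _ _))
      (Finset.mem_erase.2 ⟨hab, ha⟩)
  have nb : (∏ j ∈ (S.erase a).erase b, (v b - v j)) ≠ 0 :=
    prod_erase_ne_zero v (hinj.mono (Finset.erase_subset _ _)) (Finset.mem_erase.2 ⟨hab.symm, hb⟩)
  have haeq : F (v a) / (∏ j ∈ S.erase a, (v a - v j)) * (v a - v b)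
      = F (v a) / ∏ j ∈ (S.erase a).erase b, (v a - v j) := by
    rw [← ea]; field_simp
  have hbeq : F (v b) / (∏ j ∈ S.erase b, (v b - v j)) * (v a - v b)
      = - (F (v b) / ∏ j ∈ (S.erase a).erase b, (v b - v j)) := by
    have hvba : v b - v a ≠ 0 := fun h => hvab (by linarith [sub_eq_zero.1 h])
    rw [← eb]; field_simp; ring
  linear_combination haeq + hbeq + hsum

end DDF

section List
variable {ι : Type*} [DecidableEq ι]

lemma DDF_list (v : ι → ℝ) (hv : Function.Injective v) :
    ∀ (n : ℕ) (l : List ι), l.length = n → l.Nodup → l ≠ [] → ∀ k : ℕ,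
    DDF v (fun t => t ^ (l.length - 1 + k)) l.toFinset = hpoly k (l.map v) := by
  intro n
  induction n using Nat.strong_induction_on with
  | _ n IH =>
    intro l hlen hnd hne k
    match l with
    | [] => exact absurd rfl hne
    | [a] =>
      simp only [DDF, List.toFinset_cons, List.toFinset_nil, insert_empty_eq,
        Finset.sum_singleton, Finset.erase_singleton, Finset.prod_empty, div_one,
        List.length_cons, List.length_nil, List.map_cons, List.map_nil]
      rw [hpoly_singleton]
      norm_num
    | a :: b :: t =>
      have hab : a ≠ b := by simp [List.nodup_cons] at hnd; tauto
      have hat : a ∉ t := by simp [List.nodup_cons] at hnd; tauto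
      have hbt : b ∉ t := by simp [List.nodup_cons] at hnd; tauto
      have hndt : t.Nodup := by simp [List.nodup_cons] at hnd; tauto
      have ha : a ∈ (a :: b :: t).toFinset := by simp
      have hb : b ∈ (a :: b :: t).toFinset := by simp
      have heb : (a :: b :: t).toFinset.erase b = (a :: t).toFinset := by
        ext x
        simp only [Finset.mem_erase, List.mem_toFinset, List.mem_cons]
        constructor
        · rintro ⟨hxb, h⟩; tauto
        · rintro (rfl | hx)
          · exact ⟨hab, Or.inl rfl⟩
          · exact ⟨fun h => hbt (h ▸ hx), Or.inr (Or.inr hx)⟩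
      have hea : (a :: b :: t).toFinset.erase a = (b :: t).toFinset := by
        ext x
        simp only [Finset.mem_erase, List.mem_toFinset, List.mem_cons]
        constructor
        · rintro ⟨hxa, h⟩; tauto
        · rintro (rfl | hx)
          · exact ⟨hab.symm, Or.inr (Or.inl rfl)⟩
          · exact ⟨fun h => hat (h ▸ hx), Or.inr (Or.inr hx)⟩
      rw [DDF_rec v _ ha hb hab hv.injOn]
      have hlt : t.length + 1 < n := by simp at hlen; omega
      have h1 := IH (t.length + 1) hlt (a :: t) (by simp) (by simp [List.nodup_cons]; tauto)
        (by simp) (k + 1)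
      have h2 := IH (t.length + 1) hlt (b :: t) (by simp) (by simp [List.nodup_cons]; tauto)
        (by simp) (k + 1)
      have hexp : ∀ c : ι, c ∈ ({a, b} : Set ι) → True := fun _ _ => trivial
      have hlen1 : (a :: t).length - 1 + (k + 1) = (a :: b :: t).length - 1 + k := by
        simp; omega
      have hlen2 : (b :: t).length - 1 + (k + 1) = (a :: b :: t).length - 1 + k := by
        simp; omega
      rw [hlen1] at h1
      rw [hlen2] at h2
      rw [heb, hea, h1, h2]
      have hvab : v a - v b ≠ 0 := sub_ne_zero.2 fun h => hab (hv h)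
      rw [List.map_cons, List.map_cons, List.map_cons]
      rw [div_eq_iff hvab]
      rw [List.map_cons, mul_comm, hpoly_sub k (v a) (v b) (t.map v)]

lemma DDF_pow_eq_one {N : ℕ} (hN : 1 ≤ N) (p : Fin N → ℝ) (hinj : Function.Injective p)
    (hsum : ∑ j, p j = 1) : DDF p (fun t => t ^ N) Finset.univ = 1 := by
  have h := DDF_list p hinj N (List.finRange N) (by simp) (List.nodup_finRange N)
    (by simp; omega) 1
  rw [List.toFinset_finRange] at h
  have : (List.finRange N).length - 1 + 1 = N := by simp; omega
  rw [this] at h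
  rw [h, hpoly_one]
  rw [← hsum, Fin.sum_univ_def]

/-- reindex a DDF over `univ` through `succAbove`. -/
lemma DDF_comp_succAbove {n : ℕ} (q : Fin (n+2) → ℝ) (F : ℝ → ℝ) (p : Fin (n+2)) :
    DDF (q ∘ p.succAbove) F Finset.univ = DDF q F (Finset.univ.erase p) := by
  have himg : Finset.univ.image p.succAbove = Finset.univ.erase p := by
    rw [Fin.image_succAbove_univ, Finset.compl_singleton]
  rw [DDF, DDF, ← himg]
  rw [Finset.sum_image (fun x _ y _ h => Fin.succAbove_right_injective h)]
  refine Finset.sum_congr rfl fun i _ => ?_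
  congr 1
  rw [← Finset.image_erase Fin.succAbove_right_injective, Finset.prod_image
    (fun x _ y _ h => Fin.succAbove_right_injective h)]
  rfl

def Tset (n : ℕ) : Set (Fin n → ℝ) := {x | (∀ j, 0 ≤ x j) ∧ ∑ j, x j ≤ 1}

noncomputable def sFun {n : ℕ} (q : Fin (n+1) → ℝ) (x : Fin n → ℝ) : ℝ :=
  ∑ i : Fin n, q i.castSucc * x i + q (Fin.last n) * (1 - ∑ i, x i)

lemma continuous_sum_coords {n : ℕ} : Continuous (fun x : Fin n → ℝ => ∑ j, x j) :=
  continuous_finset_sum _ fun i _ => continuous_apply i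

lemma isClosed_Tset (n : ℕ) : IsClosed (Tset n) := by
  have : Tset n = (⋂ j, {x : Fin n → ℝ | 0 ≤ x j}) ∩ {x | ∑ j, x j ≤ 1} := by
    ext x; simp [Tset, Set.mem_iInter]
  rw [this]
  exact IsClosed.inter (isClosed_iInter fun j =>
      isClosed_le continuous_const (continuous_apply j))
    (isClosed_le continuous_sum_coords continuous_const)

lemma isCompact_Tset (n : ℕ) : IsCompact (Tset n) := by
  refine IsCompact.of_isClosed_subset (isCompact_Icc (a := fun _ : Fin n => (0:ℝ))
    (b := fun _ => 1)) (isClosed_Tset n) ?_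
  intro x hx
  obtain ⟨h0, h1⟩ := hx
  constructor
  · intro j; exact h0 j
  · intro j
    calc x j ≤ ∑ i, x i := Finset.single_le_sum (fun i _ => h0 i) (Finset.mem_univ j)
    _ ≤ 1 := h1

lemma measurableSet_Tset (n : ℕ) : MeasurableSet (Tset n) := (isClosed_Tset n).measurableSet

lemma continuous_sFun {n : ℕ} (q : Fin (n+1) → ℝ) : Continuous (sFun q) := by
  unfold sFun
  exact ((continuous_finset_sum _ fun i _ => continuous_const.mul (continuous_apply i)).add
    (continuous_const.mul (continuous_const.sub continuous_sum_coords)))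

lemma sFun_pos {n : ℕ} {q : Fin (n+1) → ℝ} (hq : ∀ i, 0 < q i) {x : Fin n → ℝ}
    (hx : x ∈ Tset n) : 0 < sFun q x := by
  obtain ⟨hx0, hx1⟩ := hx
  set m := Finset.univ.inf' (univ_nonempty) q with hm
  have hmpos : 0 < m := by
    rw [hm, Finset.lt_inf'_iff]
    exact fun i _ => hq i
  have hmle : ∀ i, m ≤ q i := fun i => Finset.inf'_le _ (mem_univ i)
  have h1 : m * (∑ i, x i) ≤ ∑ i : Fin n, q i.castSucc * x i := by
    rw [Finset.mul_sum]
    exact Finset.sum_le_sum fun i _ => mul_le_mul_of_nonneg_right (hmle _) (hx0 i)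
  have h2 : m * (1 - ∑ i, x i) ≤ q (Fin.last n) * (1 - ∑ i, x i) :=
    mul_le_mul_of_nonneg_right (hmle _) (by linarith)
  have : m ≤ sFun q x := by
    unfold sFun; nlinarith
  linarith

lemma snoc_mem_Tset_iff {n : ℕ} (z : Fin n → ℝ) (y : ℝ) :
    Fin.snoc z y ∈ Tset (n+1) ↔ z ∈ Tset n ∧ y ∈ Set.Icc 0 (1 - ∑ i, z i) := by
  simp only [Tset, Set.mem_setOf_eq, Set.mem_Icc]
  have hs : ∑ i : Fin (n+1), Fin.snoc z y i = ∑ i : Fin n, z i + y := by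
    rw [Fin.sum_univ_castSucc]
    simp
  constructor
  · rintro ⟨h1, h2⟩
    rw [hs] at h2
    have hy : (0:ℝ) ≤ y := by have := h1 (Fin.last n); rwa [Fin.snoc_last] at this
    refine ⟨⟨fun j => ?_, by linarith⟩, hy, by linarith⟩
    have := h1 j.castSucc; rwa [Fin.snoc_castSucc] at this
  · rintro ⟨⟨h1, h2⟩, hy0, hy1⟩
    refine ⟨fun j => ?_, ?_⟩
    · induction j using Fin.lastCases with
      | last => rwa [Fin.snoc_last]
      | cast j => rw [Fin.snoc_castSucc]; exact h1 j
    · rw [hs]; linarith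

lemma succAbove_castSucc_last {n : ℕ} (i : Fin n) :
    ((Fin.last n).castSucc).succAbove i.castSucc = i.castSucc.castSucc := by
  rw [Fin.succAbove_of_castSucc_lt]
  rw [Fin.castSucc_lt_castSucc_iff]
  exact Fin.castSucc_lt_last i

lemma succAbove_castSucc_last' {n : ℕ} :
    ((Fin.last n).castSucc).succAbove (Fin.last n) = Fin.last (n+1) := by
  rw [Fin.succAbove_of_le_castSucc _ _ (le_refl _), Fin.succ_last]

lemma sFun_snoc {n : ℕ} (q : Fin (n+2) → ℝ) (z : Fin n → ℝ) (y : ℝ) :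
    sFun q (Fin.snoc z y) = sFun (q ∘ ((Fin.last n).castSucc).succAbove) z
      + (q ((Fin.last n).castSucc) - q (Fin.last (n+1))) * y := by
  unfold sFun
  have hs : ∑ i : Fin (n+1), Fin.snoc z y i = ∑ i : Fin n, z i + y := by
    rw [Fin.sum_univ_castSucc]; simp
  rw [hs, Fin.sum_univ_castSucc]
  simp only [Fin.snoc_castSucc, Fin.snoc_last, Function.comp_apply,
    succAbove_castSucc_last']
  have : ∀ i : Fin n, q (((Fin.last n).castSucc).succAbove i.castSucc) * z i
      = q (i.castSucc.castSucc) * z i := fun i => by rw [succAbove_castSucc_last i]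
  rw [Finset.sum_congr rfl fun i _ => this i]
  ring

lemma sFun_castSucc {n : ℕ} (q : Fin (n+2) → ℝ) (z : Fin n → ℝ) :
    sFun (q ∘ Fin.castSucc) z = sFun (q ∘ ((Fin.last n).castSucc).succAbove) z
      + (q ((Fin.last n).castSucc) - q (Fin.last (n+1))) * (1 - ∑ i, z i) := by
  unfold sFun
  simp only [Function.comp_apply, succAbove_castSucc_last']
  have : ∀ i : Fin n, q (((Fin.last n).castSucc).succAbove i.castSucc) * z i
      = q (i.castSucc.castSucc) * z i := fun i => by rw [succAbove_castSucc_last i]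
  rw [Finset.sum_congr rfl fun i _ => this i]
  ring

theorem HG : ∀ (n : ℕ) (G : ℕ → ℝ → ℝ),
    (∀ k t, 0 < t → HasDerivAt (G (k+1)) (G k t) t) →
    (∀ k, ContinuousOn (G k) (Set.Ioi 0)) →
    ∀ (q : Fin (n+1) → ℝ), (∀ i, 0 < q i) → Function.Injective q →
    ∫ x in Tset n, G 0 (sFun q x) = DDF q (G n) Finset.univ := by
  intro n
  induction n with
  | zero =>
    intro G hG hGc q hq hinj
    have hT : Tset 0 = Set.univ := by
      ext x; simp [Tset]
    have hconst : ∀ x : Fin 0 → ℝ, sFun q x = q 0 := by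
      intro x; unfold sFun; simp [Fin.last]
    rw [hT]
    rw [MeasureTheory.setIntegral_univ]
    have : (fun x : Fin 0 → ℝ => G 0 (sFun q x)) = fun _ => G 0 (q 0) := by
      funext x; rw [hconst]
    rw [this, MeasureTheory.integral_const]
    have hvol : (volume : Measure (Fin 0 → ℝ)) Set.univ = 1 := by
      simp [MeasureTheory.volume_pi, MeasureTheory.Measure.pi_univ]
    rw [measureReal_def, hvol]
    simp [DDF]
  | succ n IH =>
    intro G hG hGc q hq hinj
    have hab_ne : (Fin.last n).castSucc ≠ Fin.last (n+1) := (Fin.castSucc_lt_last (Fin.last n)).ne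
    set a := q ((Fin.last n).castSucc) with ha_def
    set b := q (Fin.last (n+1)) with hb_def
    have hd : a - b ≠ 0 := sub_ne_zero.2 fun h => hab_ne (hinj h)
    set q1 : Fin (n+1) → ℝ := q ∘ Fin.castSucc with hq1
    set q2 : Fin (n+1) → ℝ := q ∘ ((Fin.last n).castSucc).succAbove with hq2
    have hq1pos : ∀ i, 0 < q1 i := fun i => hq _
    have hq2pos : ∀ i, 0 < q2 i := fun i => hq _
    have hq1inj : Function.Injective q1 := hinj.comp (Fin.castSucc_injective _)
    have hq2inj : Function.Injective q2 := hinj.comp (Fin.succAbove_right_injective)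
    -- integrability of the full integrand
    have hf_cont : ContinuousOn (fun x => G 0 (sFun q x)) (Tset (n+1)) :=
      ContinuousOn.comp (hGc 0) (continuous_sFun q).continuousOn
        (fun x hx => sFun_pos hq hx)
    have hf_int : IntegrableOn (fun x => G 0 (sFun q x)) (Tset (n+1)) :=
      hf_cont.integrableOn_compact (isCompact_Tset (n+1))
    have hTm := measurableSet_Tset (n+1)
    have hInd : Integrable (Set.indicator (Tset (n+1)) (fun x => G 0 (sFun q x))) :=
      (integrable_indicator_iff hTm).2 hf_int
    set e := MeasurableEquiv.piFinSuccAbove (fun _ : Fin (n+1) => ℝ) (Fin.last n) with he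
    have mp := MeasureTheory.volume_preserving_piFinSuccAbove (fun _ : Fin (n+1) => ℝ) (Fin.last n)
    have mps := mp.symm e
    have hcomp : ∀ p : ℝ × (Fin n → ℝ), e.symm p = Fin.snoc p.2 p.1 := by
      intro p
      simp [he, MeasurableEquiv.piFinSuccAbove, Fin.snocEquiv, Fin.insertNth_last']
    have step1 : ∫ x in Tset (n+1), G 0 (sFun q x)
        = ∫ x, Set.indicator (Tset (n+1)) (fun x => G 0 (sFun q x)) x :=
      (integral_indicator hTm).symm
    have step2 : ∫ x, Set.indicator (Tset (n+1)) (fun x => G 0 (sFun q x)) x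
        = ∫ p : ℝ × (Fin n → ℝ),
            Set.indicator (Tset (n+1)) (fun x => G 0 (sFun q x)) (e.symm p) :=
      (mps.integral_comp e.symm.measurableEmbedding _).symm
    have hIndP : Integrable (fun p : ℝ × (Fin n → ℝ) =>
        Set.indicator (Tset (n+1)) (fun x => G 0 (sFun q x)) (e.symm p)) :=
      (mps.integrable_comp_emb e.symm.measurableEmbedding).2 hInd
    have step3 : (∫ p : ℝ × (Fin n → ℝ),
          Set.indicator (Tset (n+1)) (fun x => G 0 (sFun q x)) (e.symm p))
        = ∫ z : Fin n → ℝ, ∫ y : ℝ,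
            Set.indicator (Tset (n+1)) (fun x => G 0 (sFun q x)) (e.symm (y, z)) := by
      rw [MeasureTheory.Measure.volume_eq_prod] at hIndP
      rw [MeasureTheory.Measure.volume_eq_prod (α := ℝ) (β := Fin n → ℝ)]
      exact MeasureTheory.integral_prod_symm _ hIndP
    set g : (Fin n → ℝ) → ℝ := fun z =>
      ∫ y in Set.Icc (0:ℝ) (1 - ∑ i, z i), G 0 (sFun q (Fin.snoc z y)) with hgdef
    have step45 : ∀ z : Fin n → ℝ,
        (∫ y : ℝ, Set.indicator (Tset (n+1)) (fun x => G 0 (sFun q x)) (e.symm (y, z)))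
          = Set.indicator (Tset n) g z := by
      intro z
      by_cases hz : z ∈ Tset n
      · rw [Set.indicator_of_mem hz]
        have hptw : (fun y : ℝ => Set.indicator (Tset (n+1))
            (fun x => G 0 (sFun q x)) (e.symm (y, z)))
            = Set.indicator (Set.Icc (0:ℝ) (1 - ∑ i, z i))
              (fun y => G 0 (sFun q (Fin.snoc z y))) := by
          funext y
          rw [hcomp (y, z)]
          by_cases hy : y ∈ Set.Icc (0:ℝ) (1 - ∑ i, z i)
          · rw [Set.indicator_of_mem hy,
              Set.indicator_of_mem ((snoc_mem_Tset_iff z y).2 ⟨hz, hy⟩)]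
          · rw [Set.indicator_of_notMem hy, Set.indicator_of_notMem
              (fun hmem => hy ((snoc_mem_Tset_iff z y).1 hmem).2)]
        rw [hptw, integral_indicator measurableSet_Icc]
      · rw [Set.indicator_of_notMem hz]
        have hptw : (fun y : ℝ => Set.indicator (Tset (n+1))
            (fun x => G 0 (sFun q x)) (e.symm (y, z))) = fun _ => (0:ℝ) := by
          funext y
          rw [hcomp (y, z)]
          exact Set.indicator_of_notMem
            (fun hmem => hz ((snoc_mem_Tset_iff z y).1 hmem).1) _
        rw [hptw]
        simp
    have step6 : (∫ z : Fin n → ℝ, ∫ y : ℝ,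
          Set.indicator (Tset (n+1)) (fun x => G 0 (sFun q x)) (e.symm (y, z)))
        = ∫ z in Tset n, g z := by
      rw [show (fun z : Fin n → ℝ => ∫ y : ℝ,
          Set.indicator (Tset (n+1)) (fun x => G 0 (sFun q x)) (e.symm (y, z)))
        = Set.indicator (Tset n) g from funext step45]
      exact integral_indicator (measurableSet_Tset n)
    -- FTC for the inner integral
    have hFTC : ∀ z ∈ Tset n, g z = (G 1 (sFun q1 z) - G 1 (sFun q2 z)) * (a - b)⁻¹ := by
      intro z hz
      have hs0 : (0:ℝ) ≤ 1 - ∑ i, z i := by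
        have := hz.2
        linarith
      set s := 1 - ∑ i, z i with hsdef
      set c0 := sFun q2 z with hc0
      have hM : ∀ y : ℝ, sFun q (Fin.snoc z y) = c0 + (a - b) * y := fun y => sFun_snoc q z y
      have hpos : ∀ y ∈ Set.uIcc (0:ℝ) s, 0 < c0 + (a - b) * y := by
        intro y hy
        rw [Set.uIcc_of_le hs0] at hy
        rw [← hM y]
        exact sFun_pos hq ((snoc_mem_Tset_iff z y).2 ⟨hz, hy⟩)
      have hderiv : ∀ y ∈ Set.uIcc (0:ℝ) s,
          HasDerivAt (fun y => G 1 (c0 + (a - b) * y) * (a - b)⁻¹)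
            (G 0 (c0 + (a - b) * y)) y := by
        intro y hy
        have hlin : HasDerivAt (fun y : ℝ => c0 + (a - b) * y) (a - b) y := by
          have := ((hasDerivAt_id y).const_mul (a - b)).const_add c0
          simpa using this
        have hcomp2 := ((hG 0 _ (hpos y hy)).comp y hlin).mul_const (a - b)⁻¹
        rw [mul_assoc, mul_inv_cancel₀ hd, mul_one] at hcomp2
        exact hcomp2
      have hint : IntervalIntegrable (fun y => G 0 (c0 + (a - b) * y)) volume 0 s := by
        apply ContinuousOn.intervalIntegrable
        exact ContinuousOn.comp (hGc 0)
          ((continuous_const.add (continuous_const.mul continuous_id)).continuousOn)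
          (fun y hy => hpos y hy)
      have hkey := intervalIntegral.integral_eq_sub_of_hasDerivAt hderiv hint
      have hgz : g z = ∫ y in (0:ℝ)..s, G 0 (c0 + (a - b) * y) := by
        rw [hgdef]
        simp only []
        rw [integral_Icc_eq_integral_Ioc, ← intervalIntegral.integral_of_le hs0]
        refine intervalIntegral.integral_congr fun y hy => ?_
        rw [hM]
      have hend : c0 + (a - b) * s = sFun q1 z := by
        have := sFun_castSucc q z
        rw [← hq1, ← hq2] at this
        rw [this, ← hc0, ← ha_def, ← hb_def, ← hsdef]
      rw [hgz, hkey]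
      rw [hend]
      ring_nf
    -- outer integral
    have hcontz : ∀ (r : Fin (n+1) → ℝ), (∀ i, 0 < r i) →
        IntegrableOn (fun z => G 1 (sFun r z)) (Tset n) := by
      intro r hr
      exact (ContinuousOn.comp (hGc 1) (continuous_sFun r).continuousOn
        (fun z hz => sFun_pos hr hz)).integrableOn_compact (isCompact_Tset n)
    have step7 : ∫ z in Tset n, g z
        = ((∫ z in Tset n, G 1 (sFun q1 z)) - ∫ z in Tset n, G 1 (sFun q2 z)) * (a - b)⁻¹ := by
      rw [MeasureTheory.setIntegral_congr_fun (measurableSet_Tset n) hFTC]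
      rw [MeasureTheory.integral_mul_const]
      rw [MeasureTheory.integral_sub (hcontz q1 hq1pos) (hcontz q2 hq2pos)]
    have hIH1 : ∫ z in Tset n, G 1 (sFun q1 z) = DDF q1 (G (n+1)) Finset.univ :=
      IH (fun k => G (k+1)) (fun k t ht => hG (k+1) t ht) (fun k => hGc (k+1)) q1 hq1pos hq1inj
    have hIH2 : ∫ z in Tset n, G 1 (sFun q2 z) = DDF q2 (G (n+1)) Finset.univ :=
      IH (fun k => G (k+1)) (fun k t ht => hG (k+1) t ht) (fun k => hGc (k+1)) q2 hq2pos hq2inj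
    have hq1' : q1 = q ∘ (Fin.last (n+1)).succAbove := by
      rw [hq1, Fin.succAbove_last]
    have hDD1 : DDF q1 (G (n+1)) Finset.univ = DDF q (G (n+1)) (Finset.univ.erase (Fin.last (n+1))) := by
      rw [hq1']
      exact DDF_comp_succAbove q (G (n+1)) (Fin.last (n+1))
    have hDD2 : DDF q2 (G (n+1)) Finset.univ = DDF q (G (n+1)) (Finset.univ.erase ((Fin.last n).castSucc)) := by
      rw [hq2]
      exact DDF_comp_succAbove q (G (n+1)) ((Fin.last n).castSucc)
    have hrec := DDF_rec q (G (n+1)) (Finset.mem_univ ((Fin.last n).castSucc))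
      (Finset.mem_univ (Fin.last (n+1))) hab_ne hinj.injOn
    rw [step1, step2, step3, step6, step7, hIH1, hIH2, hDD1, hDD2, hrec]
    rw [div_eq_mul_inv]

/-- antiderivative family for `t * log t`. -/
noncomputable def Glog (k : ℕ) (t : ℝ) : ℝ :=
  t ^ (k+1) * (Real.log t - (harmonicNum (k+1) - 1)) / ((k+1).factorial : ℝ)

lemma Glog_zero (t : ℝ) : Glog 0 t = t * Real.log t := by
  simp [Glog, harmonicNum]

lemma harmonicNum_succ (k : ℕ) :
    harmonicNum (k+1) = harmonicNum k + 1 / ((k:ℝ) + 1) := by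
  rw [harmonicNum, Finset.sum_range_succ, harmonicNum]

lemma Glog_deriv (k : ℕ) (t : ℝ) (ht : 0 < t) : HasDerivAt (Glog (k+1)) (Glog k t) t := by
  have h1 : HasDerivAt (fun t : ℝ => t ^ (k+2) * (Real.log t - (harmonicNum (k+2) - 1)))
      (((k+2) : ℕ) * t ^ (k+1) * (Real.log t - (harmonicNum (k+2) - 1))
        + t ^ (k+2) * t⁻¹) t := by
    have hp := hasDerivAt_pow (k+2) t
    have hl := (Real.hasDerivAt_log ht.ne').sub_const (harmonicNum (k+2) - 1)
    have := hp.mul hl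
    rw [show k+2-1 = k+1 by omega] at this
    exact this
  have h2 := h1.div_const (((k+2).factorial : ℕ) : ℝ)
  have heq : (((k+2) : ℕ) * t ^ (k+1) * (Real.log t - (harmonicNum (k+2) - 1))
        + t ^ (k+2) * t⁻¹) / (((k+2).factorial : ℕ) : ℝ) = Glog k t := by
    rw [Glog]
    have hfac : (((k+2).factorial : ℕ) : ℝ) = ((k+2) : ℝ) * ((k+1).factorial : ℝ) := by
      rw [show k+2 = (k+1)+1 from rfl, Nat.factorial_succ]
      push_cast; ring
    have hh : harmonicNum (k+2) = harmonicNum (k+1) + 1 / ((k:ℝ) + 2) := by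
      rw [harmonicNum_succ (k+1)]
      push_cast; ring_nf
    have hfpos : (0:ℝ) < ((k+1).factorial : ℝ) := by positivity
    have htinv : t ^ (k+2) * t⁻¹ = t ^ (k+1) := by
      rw [pow_succ]
      field_simp
    rw [hh, hfac, htinv]
    field_simp
    push_cast
    ring
  rw [show Glog (k+1) = fun t : ℝ => t ^ (k+2) * (Real.log t - (harmonicNum (k+2) - 1))
      / (((k+2).factorial : ℕ) : ℝ) from rfl] at *
  exact heq ▸ h2

lemma Glog_cont (k : ℕ) : ContinuousOn (Glog k) (Set.Ioi 0) := by
  apply ContinuousOn.div_const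
  exact (continuous_pow _).continuousOn.mul
    ((Real.continuousOn_log.mono (fun x hx => ne_of_gt hx)).sub continuousOn_const)

/-- antiderivative family for `t ^ α`. -/
noncomputable def Gpow (α : ℝ) (k : ℕ) (t : ℝ) : ℝ :=
  t ^ (α + k) / ∏ j ∈ Finset.range k, (α + j + 1)

lemma Gpow_zero (α t : ℝ) : Gpow α 0 t = t ^ α := by
  simp [Gpow]

lemma Gpow_deriv (α : ℝ) (hα : 0 < α) (k : ℕ) (t : ℝ) (ht : 0 < t) :
    HasDerivAt (Gpow α (k+1)) (Gpow α k t) t := by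
  have h0 : HasDerivAt (fun x : ℝ => x ^ (α + (k+1 : ℕ)))
      ((α + (k+1 : ℕ)) * t ^ (α + (k+1 : ℕ) - 1)) t :=
    Real.hasDerivAt_rpow_const (Or.inl ht.ne')
  have hexp : α + ((k+1 : ℕ) : ℝ) - 1 = α + k := by push_cast; ring
  have h2 := h0.div_const (∏ j ∈ Finset.range (k+1), (α + j + 1))
  have heq : (α + ((k+1 : ℕ) : ℝ)) * t ^ (α + ((k+1:ℕ):ℝ) - 1)
      / ∏ j ∈ Finset.range (k+1), (α + j + 1) = Gpow α k t := by
    rw [hexp, Gpow, Finset.prod_range_succ]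
    have hne : α + (k:ℝ) + 1 ≠ 0 := by positivity
    rw [show (α + ((k+1:ℕ):ℝ)) = α + (k:ℝ) + 1 by push_cast; ring]
    rw [mul_comm (α + (k:ℝ) + 1) (t ^ (α + (k:ℝ)))]
    rw [mul_div_mul_right _ _ hne]
  rw [show Gpow α (k+1) = fun t : ℝ => t ^ (α + ((k+1:ℕ):ℝ))
      / ∏ j ∈ Finset.range (k+1), (α + j + 1) from rfl]
  exact heq ▸ h2

lemma Gpow_cont (α : ℝ) (k : ℕ) : ContinuousOn (Gpow α k) (Set.Ioi 0) := by
  apply ContinuousOn.div_const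
  exact ContinuousOn.rpow_const continuousOn_id (fun x hx => Or.inl (ne_of_gt hx))

lemma prod_range_add_two (n : ℕ) :
    ∏ j ∈ Finset.range n, ((j:ℝ) + 2) = ((n+1).factorial : ℝ) := by
  induction n with
  | zero => simp
  | succ n ih =>
    rw [Finset.prod_range_succ, ih]
    push_cast [Nat.factorial_succ]
    ring

lemma harmonic_shift (n : ℕ) :
    harmonicNum (n+1) - 1 = ∑ k ∈ Finset.range n, (1:ℝ) / (k + 2) := by
  rw [harmonicNum, Finset.sum_range_succ']
  have h : ∀ k ∈ Finset.range n, (1:ℝ)/(↑(k+1)+1) = 1/((k:ℝ)+2) := by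
    intro k _
    push_cast
    ring_nf
  rw [Finset.sum_congr rfl h]
  norm_num

lemma sum_mul_simplexMap {n : ℕ} (p : Fin (n+1) → ℝ) (x : Fin n → ℝ) :
    ∑ j, p j * simplexMap (n+1) x j = sFun p x := by
  rw [Fin.sum_univ_castSucc (f := fun j : Fin (n+1) => p j * simplexMap (n+1) x j)]
  unfold sFun simplexMap
  congr 1
  · refine Finset.sum_congr rfl fun i _ => ?_
    rw [dif_pos (show ((i.castSucc : Fin (n+1)) : ℕ) < n+1-1 from i.isLt)]
    rfl
  · rw [dif_neg (by simp)]
    rfl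

lemma simplexIntegral_eq (n : ℕ) (f : (Fin (n+1) → ℝ) → ℝ) :
    simplexIntegral (n+1) f
      = (n.factorial : ℝ) * ∫ x : Fin n → ℝ in Tset n, f (simplexMap (n+1) x) := rfl

/-- Appendix A(ii): the derivative of `I_p(α)` at `α = 1` equals
`-(1/N)(H_N - 1 + Q(p))`; equivalently the corresponding `x ln x`-integral has this value. -/
theorem dirichlet_integral_deriv (N : ℕ) (hN : 1 ≤ N) (p : Fin N → ℝ)
    (hp : ∀ j, 0 < p j) (hsum : ∑ j, p j = 1)
    (hdist : ∀ j k : Fin N, j ≠ k → p j ≠ p k) :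
    HasDerivAt (fun α : ℝ => simplexIntegral N (fun lam => (∑ j, p j * lam j) ^ α))
        (-(1 / N) * (harmonicNum N - 1 + subentropy p)) 1 ∧
    simplexIntegral N (fun lam => (∑ j, p j * lam j) * Real.log (∑ j, p j * lam j)) =
      -(1 / N) * (harmonicNum N - 1 + subentropy p) := by
  obtain ⟨n, rfl⟩ : ∃ n, N = n + 1 := ⟨N - 1, (Nat.succ_pred_eq_of_pos hN).symm⟩
  have hpinj : Function.Injective p := fun j k h => by
    by_contra hne
    exact hdist j k hne h
  have hT : solidSimplex (n+1) = Tset n := rfl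
  have hfacc : ((n+1-1).factorial : ℝ) = (n.factorial : ℝ) := rfl
  have hS1 : (∑ i, p i ^ (n+1) / ∏ j ∈ Finset.univ.erase i, (p i - p j)) = 1 := by
    simpa [DDF] using DDF_pow_eq_one (Nat.le_add_left 1 n) p hpinj hsum
  have hR : (∑ i, p i ^ (n+1) * Real.log (p i) / ∏ j ∈ Finset.univ.erase i, (p i - p j))
      = - subentropy p := by
    rw [subentropy, neg_neg]
  have hfspos : (0:ℝ) < ((n+1).factorial : ℝ) := by positivity
  have hfacsucc : ((n+1).factorial : ℝ) = ((n:ℝ)+1) * (n.factorial : ℝ) := by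
    rw [Nat.factorial_succ]; push_cast; ring
  have hnfpos : (0:ℝ) < (n.factorial : ℝ) := by positivity
  -- ===== conjunct 2 =====
  have hconj2 : simplexIntegral (n+1)
      (fun lam => (∑ j, p j * lam j) * Real.log (∑ j, p j * lam j)) =
      -(1 / ((n:ℝ)+1)) * (harmonicNum (n+1) - 1 + subentropy p) := by
    rw [simplexIntegral_eq]
    have hint : (fun x : Fin n → ℝ =>
        (∑ j, p j * simplexMap (n+1) x j) * Real.log (∑ j, p j * simplexMap (n+1) x j))
        = fun x => Glog 0 (sFun p x) := by
      funext x
      rw [sum_mul_simplexMap p x, Glog_zero]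
    rw [show (∫ x : Fin n → ℝ in Tset n,
        (∑ j, p j * simplexMap (n+1) x j) * Real.log (∑ j, p j * simplexMap (n+1) x j))
        = ∫ x in Tset n, Glog 0 (sFun p x) from by rw [hint]]
    rw [HG n Glog Glog_deriv Glog_cont p hp hpinj]
    have hcongr2 : ∀ i : Fin (n+1), Glog n (p i) / ∏ j ∈ Finset.univ.erase i, (p i - p j)
        = (p i ^ (n+1) * Real.log (p i) / ∏ j ∈ Finset.univ.erase i, (p i - p j)
           - (harmonicNum (n+1) - 1) * (p i ^ (n+1) / ∏ j ∈ Finset.univ.erase i, (p i - p j)))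
          / ((n+1).factorial : ℝ) := fun i => by rw [Glog]; ring
    rw [show DDF p (Glog n) Finset.univ
        = ((∑ i, p i ^ (n+1) * Real.log (p i) / ∏ j ∈ Finset.univ.erase i, (p i - p j))
          - (harmonicNum (n+1) - 1)
            * ∑ i, p i ^ (n+1) / ∏ j ∈ Finset.univ.erase i, (p i - p j))
            / ((n+1).factorial : ℝ) from by
      simp only [DDF]
      rw [Finset.sum_congr rfl fun i _ => hcongr2 i, ← Finset.sum_div,
        Finset.sum_sub_distrib, ← Finset.mul_sum]]
    rw [hR, hS1]
    rw [hfacsucc]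
    have hn1 : ((n:ℝ)+1) ≠ 0 := by positivity
    field_simp
    ring
  refine ⟨?_, by exact_mod_cast hconj2⟩
  -- ===== conjunct 1 =====
  set DC : ℝ := ∑ k ∈ Finset.range n, ∏ j ∈ (Finset.range n).erase k, ((1:ℝ) + ↑j + 1)
    with hDCdef
  have hCder : HasDerivAt (fun α : ℝ => ∏ j ∈ Finset.range n, (α + ↑j + 1)) DC 1 := by
    have h := HasDerivAt.fun_finsetProd (𝕜 := ℝ) (u := Finset.range n)
      (f := fun j α => α + (j:ℝ) + 1) (f' := fun _ => 1) (x := (1:ℝ))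
      (fun j _ => by simpa [add_assoc] using (hasDerivAt_id (1:ℝ)).add_const ((j:ℝ)+1))
    simpa [hDCdef] using h
  have hC1 : (∏ j ∈ Finset.range n, ((1:ℝ) + ↑j + 1)) = ((n+1).factorial : ℝ) := by
    rw [← prod_range_add_two n]
    exact Finset.prod_congr rfl fun j _ => by ring
  have hC1ne : (∏ j ∈ Finset.range n, ((1:ℝ) + ↑j + 1)) ≠ 0 := by
    rw [hC1]; positivity
  have hDC : DC = ((n+1).factorial : ℝ) * (harmonicNum (n+1) - 1) := by
    rw [hDCdef, harmonic_shift n, Finset.mul_sum]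
    refine Finset.sum_congr rfl fun k hk => ?_
    have h1 : ((1:ℝ) + ↑k + 1) * ∏ j ∈ (Finset.range n).erase k, ((1:ℝ) + ↑j + 1)
        = ∏ j ∈ Finset.range n, ((1:ℝ) + ↑j + 1) :=
      Finset.mul_prod_erase (Finset.range n) (fun j => (1:ℝ) + ↑j + 1) hk
    rw [hC1] at h1
    have hk2 : ((1:ℝ) + ↑k + 1) ≠ 0 := by positivity
    field_simp
    linarith [h1]
  -- derivative of each term
  have hterm : ∀ i : Fin (n+1), HasDerivAt
      (fun α : ℝ => p i ^ (α + (n:ℝ)) / ∏ j ∈ Finset.range n, (α + ↑j + 1))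
      ((p i ^ ((1:ℝ) + (n:ℝ)) * Real.log (p i) * (∏ j ∈ Finset.range n, ((1:ℝ) + ↑j + 1))
        - p i ^ ((1:ℝ) + (n:ℝ)) * DC) / (∏ j ∈ Finset.range n, ((1:ℝ) + ↑j + 1))^2) 1 := by
    intro i
    have h0 := (Real.hasStrictDerivAt_const_rpow (hp i) ((1:ℝ) + (n:ℝ))).hasDerivAt
    have hin : HasDerivAt (fun α : ℝ => α + (n:ℝ)) 1 1 := (hasDerivAt_id 1).add_const _
    have hnum : HasDerivAt (fun α : ℝ => p i ^ (α + (n:ℝ)))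
        (p i ^ ((1:ℝ) + (n:ℝ)) * Real.log (p i)) 1 := by
      have := h0.comp (1:ℝ) hin
      rw [mul_one] at this
      exact this
    exact hnum.div hCder hC1ne
  have hsumder : HasDerivAt
      (fun α : ℝ => (n.factorial : ℝ) * ∑ i, (p i ^ (α + (n:ℝ))
          / ∏ j ∈ Finset.range n, (α + ↑j + 1)) / ∏ j ∈ Finset.univ.erase i, (p i - p j))
      ((n.factorial : ℝ) * ∑ i, ((p i ^ ((1:ℝ) + (n:ℝ)) * Real.log (p i)
          * (∏ j ∈ Finset.range n, ((1:ℝ) + ↑j + 1))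
        - p i ^ ((1:ℝ) + (n:ℝ)) * DC) / (∏ j ∈ Finset.range n, ((1:ℝ) + ↑j + 1))^2
          / ∏ j ∈ Finset.univ.erase i, (p i - p j))) 1 :=
    (HasDerivAt.fun_sum fun i _ => (hterm i).div_const _).const_mul _
  -- identify the derivative value
  have hrpow : ∀ i, p i ^ ((1:ℝ) + (n:ℝ)) = p i ^ (n+1 : ℕ) := fun i => by
    rw [show (1:ℝ) + (n:ℝ) = ((n+1 : ℕ) : ℝ) by push_cast; ring, Real.rpow_natCast]
  have hval : ((n.factorial : ℝ) * ∑ i, ((p i ^ ((1:ℝ) + (n:ℝ)) * Real.log (p i)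
          * (∏ j ∈ Finset.range n, ((1:ℝ) + ↑j + 1))
        - p i ^ ((1:ℝ) + (n:ℝ)) * DC) / (∏ j ∈ Finset.range n, ((1:ℝ) + ↑j + 1))^2
          / ∏ j ∈ Finset.univ.erase i, (p i - p j)))
      = -(1 / ((n:ℝ)+1)) * (harmonicNum (n+1) - 1 + subentropy p) := by
    have hcongr : ∀ i : Fin (n+1), ((p i ^ ((1:ℝ) + (n:ℝ)) * Real.log (p i)
          * (∏ j ∈ Finset.range n, ((1:ℝ) + ↑j + 1))
        - p i ^ ((1:ℝ) + (n:ℝ)) * DC) / (∏ j ∈ Finset.range n, ((1:ℝ) + ↑j + 1))^2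
          / ∏ j ∈ Finset.univ.erase i, (p i - p j))
        = ((∏ j ∈ Finset.range n, ((1:ℝ) + ↑j + 1))
              * (p i ^ (n+1:ℕ) * Real.log (p i) / ∏ j ∈ Finset.univ.erase i, (p i - p j))
            - DC * (p i ^ (n+1:ℕ) / ∏ j ∈ Finset.univ.erase i, (p i - p j)))
            / (∏ j ∈ Finset.range n, ((1:ℝ) + ↑j + 1))^2 := by
      intro i
      rw [hrpow i]
      ring
    rw [Finset.sum_congr rfl fun i _ => hcongr i, ← Finset.sum_div,
      Finset.sum_sub_distrib, ← Finset.mul_sum, ← Finset.mul_sum, hR, hS1, hC1, hDC]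
    have hn1 : ((n:ℝ)+1) ≠ 0 := by positivity
    rw [hfacsucc]
    field_simp
    ring
  -- eventual equality with the closed form
  have hev : (fun α : ℝ => simplexIntegral (n+1) (fun lam => (∑ j, p j * lam j) ^ α))
      =ᶠ[nhds 1] (fun α : ℝ => (n.factorial : ℝ) * ∑ i, (p i ^ (α + (n:ℝ))
          / ∏ j ∈ Finset.range n, (α + ↑j + 1)) / ∏ j ∈ Finset.univ.erase i, (p i - p j)) := by
    filter_upwards [isOpen_Ioi.mem_nhds (show (0:ℝ) < 1 by norm_num)] with α hα
    rw [simplexIntegral_eq]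
    have hint : (fun x : Fin n → ℝ => (∑ j, p j * simplexMap (n+1) x j) ^ α)
        = fun x => Gpow α 0 (sFun p x) := by
      funext x
      rw [sum_mul_simplexMap p x, Gpow_zero]
    rw [show (∫ x : Fin n → ℝ in Tset n, (∑ j, p j * simplexMap (n+1) x j) ^ α)
        = ∫ x in Tset n, Gpow α 0 (sFun p x) from by rw [hint]]
    rw [HG n (Gpow α) (fun k t ht => Gpow_deriv α hα k t ht) (Gpow_cont α) p hp hpinj]
    rw [DDF]
    rfl
  have final := hval ▸ hsumder
  have hresult := hev.hasDerivAt_iff.mpr final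
  push_cast
  exact hresult

end List
end Aux
end

section
/- (Contour-integral evaluation used in Appendix A.) Let N ≥ 1, let p_1, …, p_N be pairwise distinct positive real numbers, and let s > 0. Then the improper integral over the real line satisfies ∫_{−∞}^{∞} e^{it} / ∏_{j=1}^N (it + s p_j) dt = (2π / s^{N−1}) Σ_{j=1}^N e^{−s p_j} / ∏_{i≠j}(p_i − p_j), where i is the imaginary unit and the integrand is a complex-valued function of the real variable t. -/
open MeasureTheory Real

open Set Filter Complex
open scoped FourierTransform


lemma aux_integrableOn_mul_cexp {c : ℂ} (hc : 0 < c.re) :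
    IntegrableOn (fun x : ℝ => (x : ℂ) * Complex.exp (-(c * x))) (Ioi (0:ℝ)) := by
  have hbase : IntegrableOn (fun x : ℝ => x ^ (1:ℝ) * Real.exp (-c.re * x ^ (1:ℝ))) (Ioi 0) :=
    integrableOn_rpow_mul_exp_neg_mul_rpow (by norm_num) (by norm_num) hc
  have hbase' : IntegrableOn (fun x : ℝ => x * Real.exp (-(c.re * x))) (Ioi 0) := by
    refine hbase.congr_fun (fun x hx => ?_) measurableSet_Ioi
    simp only [Real.rpow_one]; ring_nf
  refine (hbase'.norm.const_mul 1).mono' ?_ ?_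
  · exact (Continuous.aestronglyMeasurable (by fun_prop)).restrict
  · filter_upwards [ae_restrict_mem measurableSet_Ioi] with x hx
    have hre : (-(c * (x:ℂ))).re = -(c.re * x) := by simp
    simp only [norm_mul, Complex.norm_exp, Complex.norm_real, hre,
      one_mul, Real.norm_eq_abs, abs_mul, abs_of_pos (Real.exp_pos _)]
    exact le_rfl

lemma aux_tendsto_mul_exp {b : ℝ} (hb : 0 < b) :
    Tendsto (fun x : ℝ => x * Real.exp (-(b * x))) atTop (nhds 0) := by
  have h := (tendsto_pow_mul_exp_neg_atTop_nhds_zero 1).comp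
    (tendsto_id.const_mul_atTop hb (f := fun x : ℝ => x))
  have := h.div_const b
  simp only [Function.comp_def, pow_one, zero_div] at this
  refine this.congr fun x => ?_
  field_simp

lemma aux_tendsto_exp {b : ℝ} (hb : 0 < b) :
    Tendsto (fun x : ℝ => Real.exp (-(b * x))) atTop (nhds 0) := by
  have h := Real.tendsto_exp_neg_atTop_nhds_zero.comp
    (tendsto_id.const_mul_atTop hb (f := fun x : ℝ => x))
  simpa [Function.comp_def] using h

lemma aux_integral_mul_cexp {c : ℂ} (hc : 0 < c.re) :
    ∫ x : ℝ in Ioi (0:ℝ), (x : ℂ) * Complex.exp (-(c * x)) = 1 / c ^ 2 := by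
  have hc0 : c ≠ 0 := fun h => by simp [h] at hc
  set F : ℝ → ℂ := fun x => -(x / c + 1 / c ^ 2) * Complex.exp (-(c * x)) with hF
  have hderiv : ∀ x ∈ Ioi (0:ℝ), HasDerivAt F ((x : ℂ) * Complex.exp (-(c * x))) x := by
    intro x _
    have h1 : HasDerivAt (fun x : ℝ => -(c * x)) (-c) x := by
      have := (((hasDerivAt_id x).ofReal_comp).const_mul c).neg
      simp only [Complex.ofReal_one, mul_one] at this
      exact this
    have h2 : HasDerivAt (fun x : ℝ => Complex.exp (-(c * x)))
        (Complex.exp (-(c * x)) * -c) x := h1.cexp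
    have h3 : HasDerivAt (fun x : ℝ => -((x : ℂ) / c + 1 / c ^ 2)) (-(1/c)) x := by
      exact ((((hasDerivAt_id x).ofReal_comp).div_const c).add_const (1/c^2)).neg
    have := h3.mul h2
    refine this.congr_deriv ?_
    field_simp
    ring
  have hcont : ContinuousWithinAt F (Ici 0) 0 := by
    apply Continuous.continuousWithinAt; fun_prop
  have htend : Tendsto F atTop (nhds 0) := by
    rw [tendsto_zero_iff_norm_tendsto_zero]
    have hb1 := ((aux_tendsto_mul_exp hc).div_const ‖c‖).add
        ((aux_tendsto_exp hc).const_mul ‖1/c^2‖)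
    simp only [zero_div, mul_zero, add_zero] at hb1
    refine squeeze_zero' (Eventually.of_forall fun x => norm_nonneg _) ?_ hb1
    filter_upwards [eventually_ge_atTop (0:ℝ)] with x hx
    have hre : (-(c * (x:ℂ))).re = -(c.re * x) := by simp
    have : ‖F x‖ = ‖(x:ℂ) / c + 1 / c ^ 2‖ * Real.exp (-(c.re * x)) := by
      simp only [hF, norm_mul, Complex.norm_exp, hre, norm_neg]
    rw [this]
    have habs : ‖(x:ℂ) / c + 1 / c ^ 2‖ ≤ x / ‖c‖ + ‖1/c^2‖ := by
      refine (norm_add_le _ _).trans (le_of_eq ?_)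
      rw [norm_div, Complex.norm_real, Real.norm_eq_abs, _root_.abs_of_nonneg hx]
    calc ‖↑x / c + 1 / c ^ 2‖ * Real.exp (-(c.re * x))
        ≤ (x / ‖c‖ + ‖1/c^2‖) * Real.exp (-(c.re * x)) := by
          gcongr
      _ = x * Real.exp (-(c.re * x)) / ‖c‖ +
          ‖1/c^2‖ * Real.exp (-(c.re * x)) := by ring
  have key := integral_Ioi_of_hasDerivAt_of_tendsto hcont hderiv (aux_integrableOn_mul_cexp hc) htend
  rw [key, hF]
  simp
open MeasureTheory Real Set Filter Complex
open scoped FourierTransform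

lemma aux_integrable_inv_sq {u v : ℝ} (hu : u ≠ 0) (hv : v ≠ 0) :
    Integrable (fun t : ℝ => (u^2 + (v*t)^2)⁻¹) := by
  set M := max (u^2)⁻¹ (v^2)⁻¹ with hM
  have hM0 : 0 < M := lt_of_lt_of_le (by positivity) (le_max_left _ _)
  refine (integrable_inv_one_add_sq.const_mul M).mono' ?_ ?_
  · exact (Continuous.inv₀ (f := fun t : ℝ => u^2 + (v*t)^2) (by fun_prop)
      (fun t => by positivity)).aestronglyMeasurable
  · refine Eventually.of_forall fun t => ?_
    rw [Real.norm_eq_abs, abs_of_pos (by positivity)]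
    have h1 : (1:ℝ) + t^2 ≤ M * (u^2 + (v*t)^2) := by
      have hu2 : (u^2)⁻¹ ≤ M := le_max_left _ _
      have hv2 : (v^2)⁻¹ ≤ M := le_max_right _ _
      have h2 : (1:ℝ) ≤ M * u^2 := by
        rw [← inv_mul_cancel₀ (pow_ne_zero 2 hu)]
        gcongr
      have h3 : t^2 ≤ M * (v*t)^2 := by
        calc t^2 = (v^2)⁻¹ * (v*t)^2 := by field_simp
          _ ≤ M * (v*t)^2 := by gcongr
      linarith
    calc (u^2+(v*t)^2)⁻¹ ≤ (M⁻¹ * (1+t^2))⁻¹ := by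
          apply inv_anti₀ (by positivity)
          rw [inv_mul_le_iff₀ hM0]; linarith
      _ = M * (1+t^2)⁻¹ := by rw [mul_inv, inv_inv]

lemma aux_integral_cexp_sq {a : ℝ} (ha : 0 < a) :
    ∫ t : ℝ, Complex.exp (Complex.I * t) / (Complex.I * t + a) ^ 2 =
      2 * Real.pi * Complex.exp (-(a:ℂ)) := by
  set h : ℝ → ℂ := Set.indicator (Ioi 0) (fun x => (x:ℂ) * Complex.exp (-((a:ℂ) * x))) with hh
  have hre : ((a:ℂ)).re = a := by simp
  have hint : Integrable h := by
    rw [hh, integrable_indicator_iff measurableSet_Ioi]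
    exact aux_integrableOn_mul_cexp (by simpa [hre] using ha)
  have hc : ∀ w : ℝ, (0:ℝ) < ((a:ℂ) + 2*π*w*Complex.I).re := by
    intro w; simp [ha]
  have hFh : ∀ w : ℝ, (𝓕 h) w = 1 / ((a:ℂ) + 2*π*w*Complex.I) ^ 2 := by
    intro w
    rw [Real.fourier_real_eq_integral_exp_smul]
    have : (fun v : ℝ => Complex.exp (↑(-2 * π * v * w) * Complex.I) • h v) =
        Set.indicator (Ioi 0)
          (fun v : ℝ => (v:ℂ) * Complex.exp (-(((a:ℂ) + 2*π*w*Complex.I) * v))) := by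
      ext v
      by_cases hv : v ∈ Ioi (0:ℝ)
      · rw [hh]
        rw [Set.indicator_of_mem hv, Set.indicator_of_mem hv, smul_eq_mul,
          mul_comm, mul_assoc, ← Complex.exp_add]
        congr 2
        push_cast
        ring
      · rw [hh, Set.indicator_of_notMem hv, Set.indicator_of_notMem hv, smul_zero]
    rw [this, integral_indicator measurableSet_Ioi,
      aux_integral_mul_cexp (hc w)]
  have hFint : Integrable (𝓕 h) := by
    refine Integrable.congr ?_ (Filter.Eventually.of_forall fun w => (hFh w).symm)
    refine (aux_integrable_inv_sq (ne_of_gt ha) (v := 2*π) (by positivity)).mono' ?_ ?_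
    · apply Continuous.aestronglyMeasurable
      apply Continuous.div continuous_const
      · fun_prop
      · intro w
        intro hzero
        have := hc w
        rw [pow_eq_zero_iff (by norm_num)] at hzero
        rw [hzero] at this; simp at this
    · refine Eventually.of_forall fun w => ?_
      have habs : ‖(a:ℂ) + 2*π*w*Complex.I‖ ^ 2 = a^2 + (2*π*w)^2 := by
        rw [Complex.sq_norm]
        have : (a:ℂ) + 2*π*w*Complex.I = (a:ℂ) + ((2*π*w : ℝ):ℂ) * Complex.I := by push_cast; ring
        rw [this, Complex.normSq_add_mul_I]
      simp only [norm_div, norm_one, norm_pow, one_div]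
      rw [norm_inv, norm_pow, habs]
  have hcont : ContinuousAt h 1 := by
    have hev : h =ᶠ[nhds (1:ℝ)] (fun x : ℝ => (x:ℂ) * Complex.exp (-((a:ℂ) * x))) := by
      filter_upwards [Ioi_mem_nhds (zero_lt_one)] with x hx
      rw [hh, Set.indicator_of_mem hx]
    rw [continuousAt_congr hev]
    fun_prop
  have hinv := hint.fourierInv_fourier_eq hFint hcont
  -- hinv : 𝓕⁻ (𝓕 h) 1 = h 1
  have h1 : h 1 = Complex.exp (-(a:ℂ)) := by
    rw [hh, Set.indicator_of_mem (by norm_num : (1:ℝ) ∈ Ioi (0:ℝ))]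
    norm_num
  have hinv2 : ∫ w : ℝ, Complex.exp (↑(2 * π * w) * Complex.I) *
      (1 / ((a:ℂ) + 2*π*w*Complex.I) ^ 2) = Complex.exp (-(a:ℂ)) := by
    rw [← h1, ← hinv, Real.fourierInv_eq']
    congr 1
    ext w
    rw [hFh w, smul_eq_mul]
    norm_num
  -- change of variables
  have hcov := MeasureTheory.Measure.integral_comp_mul_left
    (g := fun t : ℝ => Complex.exp (Complex.I * t) / (Complex.I * t + a) ^ 2) (2*π)
  have h2π : (0:ℝ) < 2 * π := by positivity
  have hlhs : (∫ w : ℝ, Complex.exp (Complex.I * ↑(2*π*w)) / (Complex.I * ↑(2*π*w) + a) ^ 2)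
      = Complex.exp (-(a:ℂ)) := by
    rw [← hinv2]
    congr 1; ext w
    rw [div_eq_mul_one_div]
    congr 2
    · push_cast; ring
    · push_cast; ring
  rw [hlhs] at hcov
  rw [abs_of_pos (by positivity : (0:ℝ) < (2*π)⁻¹)] at hcov
  have : ∫ t : ℝ, Complex.exp (Complex.I * t) / (Complex.I * t + a) ^ 2 =
      (2*π) • Complex.exp (-(a:ℂ)) := by
    rw [hcov, smul_smul]
    rw [mul_inv_cancel₀ (ne_of_gt h2π), one_smul]
  rw [this, Complex.real_smul]
  push_cast; ring
open MeasureTheory Real Set Filter Complex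
open scoped FourierTransform

lemma aux_one_pole {a : ℝ} (ha : 0 < a) :
    Tendsto (fun R : ℝ => ∫ t in (-R)..R, Complex.exp (Complex.I * t) / (Complex.I * t + a))
      atTop (nhds (2 * π * Complex.exp (-(a:ℂ)))) := by
  have hne : ∀ t : ℝ, Complex.I * t + (a:ℂ) ≠ 0 := by
    intro t h
    have h2 := congrArg Complex.re h
    simp at h2
    simp [h2] at ha
  have hbase : ∀ x : ℝ, HasDerivAt (fun t : ℝ => Complex.I * t + (a:ℂ)) Complex.I x := by
    intro x
    simpa using (((hasDerivAt_id x).ofReal_comp).const_mul Complex.I).add_const (a:ℂ)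
  have key : ∀ R : ℝ, (∫ t in (-R)..R, Complex.exp (Complex.I * t) / (Complex.I * t + a)) =
      ((Complex.I * R + a)⁻¹ * (-Complex.I * Complex.exp (Complex.I * R)) -
        (Complex.I * (-R : ℝ) + a)⁻¹ * (-Complex.I * Complex.exp (Complex.I * (-R : ℝ)))) +
      ∫ t in (-R)..R, Complex.exp (Complex.I * t) / (Complex.I * t + a) ^ 2 := by
    intro R
    have hu : ∀ x ∈ Set.uIcc (-R) R, HasDerivAt (fun t : ℝ => (Complex.I * t + (a:ℂ))⁻¹)
        (-Complex.I / (Complex.I * x + (a:ℂ)) ^ 2) x :=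
      by
      intro x _
      have hf : HasDerivAt (fun z : ℂ => (Complex.I * z + (a:ℂ))⁻¹)
          (-Complex.I / (Complex.I * (x:ℂ) + (a:ℂ)) ^ 2) (x:ℂ) := by
        have := (((hasDerivAt_id (x:ℂ)).const_mul Complex.I).add_const (a:ℂ)).inv (hne x)
        simp only [mul_one] at this
        exact this
      exact hf.comp_ofReal
    have hv : ∀ x ∈ Set.uIcc (-R) R,
        HasDerivAt (fun t : ℝ => -Complex.I * Complex.exp (Complex.I * t))
        (Complex.exp (Complex.I * x)) x := by
      intro x _
      have h := ((hbase x).sub_const (a:ℂ)).cexp.const_mul (-Complex.I)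
      simp only [add_sub_cancel_right] at h
      refine h.congr_deriv ?_
      have h3 : -Complex.I * (Complex.exp (Complex.I * (x:ℂ)) * Complex.I) =
          -(Complex.I * Complex.I) * Complex.exp (Complex.I * (x:ℂ)) := by ring
      rw [h3, Complex.I_mul_I]
      ring
    have hu' : IntervalIntegrable (fun x : ℝ => -Complex.I / (Complex.I * x + (a:ℂ)) ^ 2)
        MeasureTheory.volume (-R) R := by
      apply Continuous.intervalIntegrable
      exact continuous_const.div (by fun_prop) (fun x => pow_ne_zero 2 (hne x))
    have hv' : IntervalIntegrable (fun x : ℝ => Complex.exp (Complex.I * x))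
        MeasureTheory.volume (-R) R := by
      apply Continuous.intervalIntegrable; fun_prop
    have h := intervalIntegral.integral_mul_deriv_eq_deriv_mul hu hv hu' hv'
    have h1 : (∫ t in (-R)..R, Complex.exp (Complex.I * t) / (Complex.I * t + a)) =
        ∫ x in (-R)..R, (Complex.I * x + (a:ℂ))⁻¹ * Complex.exp (Complex.I * x) := by
      apply intervalIntegral.integral_congr
      intro x _
      exact (div_eq_mul_inv _ _).trans (mul_comm _ _)
    rw [h1, h, sub_eq_add_neg, ← intervalIntegral.integral_neg]
    congr 1
    apply intervalIntegral.integral_congr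
    intro x _
    have h2 : (-Complex.I) * (-Complex.I * Complex.exp (Complex.I * x)) =
        -Complex.exp (Complex.I * x) := by
      rw [← mul_assoc]
      norm_num [Complex.I_mul_I]
    calc -((-Complex.I / (Complex.I * x + (a:ℂ))^2) * (-Complex.I * Complex.exp (Complex.I*x)))
        = -((Complex.I*Complex.I) * Complex.exp (Complex.I*x) / (Complex.I*(x:ℂ)+(a:ℂ))^2) := by
          ring
      _ = Complex.exp (Complex.I * x) / (Complex.I*(x:ℂ)+(a:ℂ))^2 := by
          rw [Complex.I_mul_I]; ring
  have hbdry : Tendsto (fun R : ℝ =>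
      ((Complex.I * R + (a:ℂ))⁻¹ * (-Complex.I * Complex.exp (Complex.I * R)) -
        (Complex.I * (-R : ℝ) + (a:ℂ))⁻¹ * (-Complex.I * Complex.exp (Complex.I * (-R : ℝ)))))
      atTop (nhds 0) := by
    have hbound : Tendsto (fun R : ℝ => 2 / R) atTop (nhds 0) :=
      tendsto_const_nhds.div_atTop tendsto_id
    refine squeeze_zero_norm' ?_ hbound
    filter_upwards [eventually_gt_atTop (0:ℝ)] with R hR
    have habs1 : ∀ b : ℝ, ‖(-Complex.I * Complex.exp (Complex.I * (b:ℂ)))‖ = 1 := by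
      intro b
      simp [Complex.norm_exp]
    have habs2 : ∀ b : ℝ, |b| = R → ‖((Complex.I * (b:ℂ) + (a:ℂ))⁻¹ *
        (-Complex.I * Complex.exp (Complex.I * (b:ℂ))))‖ ≤ 1 / R := by
      intro b hb
      rw [norm_mul, habs1, mul_one, norm_inv]
      have him : |(Complex.I * (b:ℂ) + (a:ℂ)).im| = |b| := by simp
      have hge : R ≤ ‖Complex.I * (b:ℂ) + (a:ℂ)‖ := by
        rw [← hb, ← him]
        exact Complex.abs_im_le_norm _
      rw [one_div]
      exact inv_anti₀ hR hge
    calc ‖(Complex.I * (R:ℂ) + (a:ℂ))⁻¹ * (-Complex.I * Complex.exp (Complex.I * (R:ℂ))) -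
        (Complex.I * ((-R : ℝ):ℂ) + (a:ℂ))⁻¹ * (-Complex.I * Complex.exp (Complex.I * ((-R:ℝ):ℂ)))‖
        ≤ ‖(Complex.I * (R:ℂ) + (a:ℂ))⁻¹ * (-Complex.I * Complex.exp (Complex.I * (R:ℂ)))‖ +
          ‖(Complex.I * ((-R : ℝ):ℂ) + (a:ℂ))⁻¹ *
            (-Complex.I * Complex.exp (Complex.I * ((-R:ℝ):ℂ)))‖ := norm_sub_le _ _
      _ ≤ 1 / R + 1 / R := by
          gcongr
          · exact habs2 R (abs_of_pos hR)
          · exact habs2 (-R) (by rw [abs_neg, abs_of_pos hR])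
      _ = 2 / R := by ring
  have hgint : Integrable (fun t : ℝ => Complex.exp (Complex.I * t) / (Complex.I * t + (a:ℂ)) ^ 2) := by
    refine (aux_integrable_inv_sq (ne_of_gt ha) (one_ne_zero) ).mono' ?_ ?_
    · apply Continuous.aestronglyMeasurable
      exact Continuous.div (by fun_prop) (by fun_prop) (fun x => pow_ne_zero 2 (hne x))
    · refine Eventually.of_forall fun t => ?_
      have habs : ‖Complex.I * (t:ℂ) + (a:ℂ)‖ ^ 2 = a^2 + (1*t)^2 := by
        rw [Complex.sq_norm]
        have : Complex.I * (t:ℂ) + (a:ℂ) = (a:ℂ) + (t:ℂ) * Complex.I := by ring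
        rw [this, Complex.normSq_add_mul_I]
        ring
      rw [norm_div, norm_pow, habs, Complex.norm_exp]
      simp
  have hmain : Tendsto (fun R : ℝ => ∫ t in (-R)..R,
      Complex.exp (Complex.I * t) / (Complex.I * t + (a:ℂ)) ^ 2) atTop
      (nhds (2 * π * Complex.exp (-(a:ℂ)))) := by
    rw [← aux_integral_cexp_sq ha]
    exact intervalIntegral_tendsto_integral hgint tendsto_neg_atTop_atBot tendsto_id
  have := hbdry.add hmain
  rw [zero_add] at this
  exact this.congr fun R => (key R).symm
lemma aux_partial_fractions {N : ℕ} (hN : 1 ≤ N) (x : Fin N → ℂ)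
    (hinj : Function.Injective x) (z : ℂ) (hz : ∀ j, z ≠ x j) :
    (∏ j, (z - x j))⁻¹ =
      ∑ j, (z - x j)⁻¹ * (∏ i ∈ Finset.univ.erase j, (x j - x i))⁻¹ := by
  haveI : Nonempty (Fin N) := Fin.pos_iff_nonempty.mp hN
  have hsum := Lagrange.sum_basis (s := (Finset.univ : Finset (Fin N))) (v := x)
    (hinj.injOn) Finset.univ_nonempty
  have heval := congrArg (Polynomial.eval z) hsum
  rw [Polynomial.eval_finset_sum, Polynomial.eval_one] at heval
  have hb : ∀ j : Fin N, Polynomial.eval z (Lagrange.basis Finset.univ x j) =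
      (∏ i ∈ Finset.univ.erase j, (x j - x i)⁻¹) *
      ∏ i ∈ Finset.univ.erase j, (z - x i) := by
    intro j
    rw [Lagrange.basis, Polynomial.eval_prod, ← Finset.prod_mul_distrib]
    refine Finset.prod_congr rfl fun i _ => ?_
    rw [Lagrange.basisDivisor]
    simp [mul_comm]
  have hP : (∏ j, (z - x j)) ≠ 0 :=
    Finset.prod_ne_zero_iff.mpr fun j _ => sub_ne_zero_of_ne (hz j)
  have hPe : ∀ j : Fin N, ∏ i ∈ Finset.univ.erase j, (z - x i) =
      (z - x j)⁻¹ * ∏ i, (z - x i) := by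
    intro j
    have := Finset.mul_prod_erase Finset.univ (fun i => z - x i) (Finset.mem_univ j)
    field_simp [sub_ne_zero_of_ne (hz j)]
    linear_combination this
  calc (∏ j, (z - x j))⁻¹ = (∏ j, (z - x j))⁻¹ *
        ∑ j, Polynomial.eval z (Lagrange.basis Finset.univ x j) := by rw [heval, mul_one]
    _ = ∑ j, (z - x j)⁻¹ * (∏ i ∈ Finset.univ.erase j, (x j - x i))⁻¹ := by
        rw [Finset.mul_sum]
        refine Finset.sum_congr rfl fun j _ => ?_
        rw [hb j, hPe j, Finset.prod_inv_distrib]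
        field_simp

/-- contour integral: for pairwise distinct positive `p_j` and `s > 0`,
the improper integral `∫_{-∞}^∞ e^{it}/∏_j (it + s p_j) dt` equals
`(2π/s^{N-1}) ∑_j e^{-s p_j}/∏_{i≠j}(p_i - p_j)`. -/
theorem contour_integral (N : ℕ) (hN : 1 ≤ N) (p : Fin N → ℝ)
    (hp : ∀ j, 0 < p j) (hdist : ∀ j k : Fin N, j ≠ k → p j ≠ p k)
    (s : ℝ) (hs : 0 < s) :
    Filter.Tendsto
      (fun R : ℝ => ∫ t in (-R)..R,
        Complex.exp (Complex.I * t) / ∏ j, (Complex.I * t + (s : ℂ) * (p j : ℂ)))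
      Filter.atTop
      (nhds (((2 * Real.pi / s ^ (N - 1) : ℝ) : ℂ) *
        ∑ j, Complex.exp (-((s : ℂ) * (p j : ℂ))) /
          ∏ i ∈ Finset.univ.erase j, ((p i : ℂ) - (p j : ℂ)))) := by
  haveI : Nonempty (Fin N) := Fin.pos_iff_nonempty.mp hN
  set A : Fin N → ℝ := fun j => s * p j with hA
  have hApos : ∀ j, 0 < A j := fun j => mul_pos hs (hp j)
  have hpdist : ∀ j k : Fin N, j ≠ k → (p j : ℂ) ≠ (p k : ℂ) := by
    intro j k hjk h
    exact hdist j k hjk (by exact_mod_cast h)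
  have hxinj : Function.Injective (fun j : Fin N => -((A j : ℝ) : ℂ)) := by
    intro j k h
    simp only [neg_inj, Complex.ofReal_inj, hA] at h
    by_contra hjk
    exact hdist j k (fun he => hjk (by rw [he])) (mul_left_cancel₀ (ne_of_gt hs) h)
  have hne : ∀ (t : ℝ) (j : Fin N), Complex.I * t + ((A j : ℝ) : ℂ) ≠ 0 := by
    intro t j h
    have h2 := congrArg Complex.re h
    simp at h2
    exact (hApos j).ne' h2
  set c : Fin N → ℂ := fun j => (∏ i ∈ Finset.univ.erase j, (((A i : ℝ):ℂ) - ((A j : ℝ):ℂ)))⁻¹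
    with hc
  have hpf : ∀ t : ℝ,
      Complex.exp (Complex.I * t) / ∏ j, (Complex.I * t + (s : ℂ) * (p j : ℂ)) =
      ∑ j, c j * (Complex.exp (Complex.I * t) / (Complex.I * t + ((A j : ℝ):ℂ))) := by
    intro t
    have hz : ∀ j : Fin N, (Complex.I * t) ≠ (fun j : Fin N => -((A j : ℝ) : ℂ)) j := by
      intro j h
      simp only [] at h
      exact hne t j (by rw [h]; ring)
    have h := aux_partial_fractions hN (fun j : Fin N => -((A j : ℝ) : ℂ)) hxinj
      (Complex.I * t) hz
    simp only [sub_neg_eq_add] at h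
    have hterm : ∀ j : Fin N,
        (∏ i ∈ Finset.univ.erase j, (-((A j : ℝ):ℂ) + ((A i : ℝ):ℂ)))⁻¹ = c j := by
      intro j
      rw [hc]
      congr 1
      exact Finset.prod_congr rfl fun i _ => by ring
    simp only [hterm] at h
    have hprod : ∏ j, (Complex.I * t + (s : ℂ) * (p j : ℂ)) =
        ∏ j, (Complex.I * t + ((A j : ℝ):ℂ)) := by
      refine Finset.prod_congr rfl fun j _ => ?_
      rw [hA]; push_cast; ring
    rw [hprod, div_eq_mul_inv, h, Finset.mul_sum]
    refine Finset.sum_congr rfl fun j _ => ?_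
    rw [hc, div_eq_mul_inv]
    ring
  have hintj : ∀ (R : ℝ) (j : Fin N), IntervalIntegrable
      (fun t : ℝ => Complex.exp (Complex.I * t) / (Complex.I * t + ((A j : ℝ):ℂ)))
      MeasureTheory.volume (-R) R := by
    intro R j
    apply Continuous.intervalIntegrable
    exact Continuous.div (by fun_prop) (by fun_prop) (fun t => hne t j)
  have hsplit : ∀ R : ℝ, (∫ t in (-R)..R,
      Complex.exp (Complex.I * t) / ∏ j, (Complex.I * t + (s : ℂ) * (p j : ℂ))) =
      ∑ j, c j * ∫ t in (-R)..R,
        Complex.exp (Complex.I * t) / (Complex.I * t + ((A j : ℝ):ℂ)) := by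
    intro R
    rw [intervalIntegral.integral_congr (fun t _ => hpf t),
      intervalIntegral.integral_finset_sum (fun j _ => (hintj R j).const_mul (c j))]
    exact Finset.sum_congr rfl fun j _ => intervalIntegral.integral_const_mul _ _
  have htends : Filter.Tendsto (fun R : ℝ => ∑ j, c j * ∫ t in (-R)..R,
      Complex.exp (Complex.I * t) / (Complex.I * t + ((A j : ℝ):ℂ)))
      Filter.atTop (nhds (∑ j, c j * (2 * Real.pi * Complex.exp (-((A j : ℝ):ℂ))))) := by
    exact tendsto_finset_sum _ fun j _ => (aux_one_pole (hApos j)).const_mul (c j)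
  have hfinal : (((2 * Real.pi / s ^ (N - 1) : ℝ) : ℂ) *
      ∑ j, Complex.exp (-((s : ℂ) * (p j : ℂ))) /
        ∏ i ∈ Finset.univ.erase j, ((p i : ℂ) - (p j : ℂ))) =
      ∑ j, c j * (2 * Real.pi * Complex.exp (-((A j : ℝ):ℂ))) := by
    rw [Finset.mul_sum]
    refine Finset.sum_congr rfl fun j _ => ?_
    have hcard : (Finset.univ.erase j).card = N - 1 := by
      rw [Finset.card_erase_of_mem (Finset.mem_univ j), Finset.card_univ, Fintype.card_fin]
    have hprodA : ∏ i ∈ Finset.univ.erase j, (((A i : ℝ):ℂ) - ((A j : ℝ):ℂ)) =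
        (s : ℂ) ^ (N - 1) * ∏ i ∈ Finset.univ.erase j, ((p i : ℂ) - (p j : ℂ)) := by
      rw [← hcard, ← Finset.prod_const ((s:ℂ)), ← Finset.prod_mul_distrib]
      refine Finset.prod_congr rfl fun i _ => ?_
      rw [hA]; push_cast; ring
    have hprodne : (∏ i ∈ Finset.univ.erase j, ((p i : ℂ) - (p j : ℂ))) ≠ 0 := by
      refine Finset.prod_ne_zero_iff.mpr fun i hi => sub_ne_zero_of_ne ?_
      exact hpdist i j (Finset.ne_of_mem_erase hi)
    have hsne : (s : ℂ) ^ (N - 1) ≠ 0 := pow_ne_zero _ (by exact_mod_cast (ne_of_gt hs))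
    have hexp : Complex.exp (-((s : ℂ) * (p j : ℂ))) = Complex.exp (-((A j : ℝ):ℂ)) := by
      rw [hA]; push_cast; ring_nf
    have hcj : c j = (((s:ℂ))^(N-1))⁻¹ *
        (∏ i ∈ Finset.univ.erase j, ((p i:ℂ) - (p j:ℂ)))⁻¹ := by
      simp only [hc]
      rw [hprodA, mul_inv]
    rw [hcj, hexp]
    push_cast
    field_simp
  rw [hfinal]
  exact htends.congr fun R => (hsplit R).symm
end

section
/- (Example: rotation gate.) Let θ ∈ ℝ with cos²θ ≠ sin²θ, and write c = cos θ, s = sin θ. The coherence generating power of the rotation U_θ = [[cos θ, sin θ], [−sin θ, cos θ]] satisfies ∫_0^1 [H(c²λ + s²(1−λ), s²λ + c²(1−λ)) − H(λ, 1−λ)] dλ = (sin⁴θ · ln(sin²θ) − cos⁴θ · ln(cos²θ)) / (cos²θ − sin²θ), where H(a, b) = −a ln a − b ln b. -/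
open MeasureTheory Real

/-!
With `F t = t² / 4 - t² log t / 2`, a primitive of `negMulLog` on all of `ℝ` (also at `0`), the
integral of `negMulLog` along the segment from `a` to `b` is the slope `(F b - F a) / (b - a)`.
Both rotated terms of the integrand run along the segment between `sin² θ` and `cos² θ`, in
opposite directions, so they contribute the same slope; the two unrotated terms contribute
`1 / 4` each, and `sin² θ + cos² θ = 1` turns twice that slope minus `1 / 2` into the closed form.
-/

noncomputable def negMulLogAntideriv (t : ℝ) : ℝ := t ^ 2 / 4 - t ^ 2 * log t / 2

lemma hasDerivAt_negMulLogAntideriv (t : ℝ) :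
    HasDerivAt negMulLogAntideriv (negMulLog t) t := by
  rcases eq_or_ne t 0 with rfl | ht
  · -- the slope at `0` is `h / 4 + negMulLog h / 2`, which tends to `0`
    rw [hasDerivAt_iff_tendsto_slope]
    have hlim : Filter.Tendsto (fun h : ℝ => h / 4 + negMulLog h / 2) (nhdsWithin 0 {0}ᶜ)
        (nhds (negMulLog 0)) := by
      have hcont : Continuous fun h : ℝ => h / 4 + negMulLog h / 2 := by fun_prop
      simpa using (hcont.tendsto 0).mono_left nhdsWithin_le_nhds
    refine hlim.congr' ?_
    filter_upwards [self_mem_nhdsWithin] with h (hh : h ≠ 0)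
    simp only [slope_def_field, negMulLogAntideriv, negMulLog, log_zero]
    field_simp
    ring
  · refine (((hasDerivAt_pow 2 t).div_const 4).sub
      (((hasDerivAt_pow 2 t).mul (hasDerivAt_log ht)).div_const 2)).congr_deriv ?_
    rw [Real.negMulLog]
    field_simp
    ring

lemma integral_negMulLog (a b : ℝ) :
    ∫ x in a..b, negMulLog x = negMulLogAntideriv b - negMulLogAntideriv a :=
  intervalIntegral.integral_eq_sub_of_hasDerivAt (fun t _ => hasDerivAt_negMulLogAntideriv t)
    (continuous_negMulLog.intervalIntegrable a b)

lemma integral_negMulLog_affine_eq_slope {a b : ℝ} (hab : a ≠ b) :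
    ∫ x in (0:ℝ)..1, negMulLog (b * x + a * (1 - x)) = slope negMulLogAntideriv a b := by
  have hba : b - a ≠ 0 := sub_ne_zero.mpr hab.symm
  have hline : (fun x => negMulLog (b * x + a * (1 - x))) =
      fun x => negMulLog (a + (b - a) * x) := by
    funext x
    ring_nf
  rw [hline, intervalIntegral.integral_comp_add_mul _ hba, integral_negMulLog, slope_def_field]
  simp only [mul_zero, add_zero, mul_one, add_sub_cancel, smul_eq_mul]
  field_simp

lemma two_mul_slope_negMulLogAntideriv {a b : ℝ} (hab : a + b = 1) (hne : a ≠ b) :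
    2 * slope negMulLogAntideriv a b = 1 / 2 + (b ^ 2 * log b - a ^ 2 * log a) / (a - b) := by
  have hsub : a - b ≠ 0 := sub_ne_zero.mpr hne
  rw [slope_def_field, negMulLogAntideriv, negMulLogAntideriv]
  field_simp
  linear_combination 4 * (a - b) * (b - a) * hab

/-- Example: rotation gate: the coherence generating power of the rotation
`U_θ` equals `(sin⁴θ ln sin²θ - cos⁴θ ln cos²θ)/(cos²θ - sin²θ)`. -/
theorem cgp_rotation (θ : ℝ) (h : Real.cos θ ^ 2 ≠ Real.sin θ ^ 2) :
    (∫ x in (0:ℝ)..1,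
        ((Real.negMulLog (Real.cos θ ^ 2 * x + Real.sin θ ^ 2 * (1 - x)) +
          Real.negMulLog (Real.sin θ ^ 2 * x + Real.cos θ ^ 2 * (1 - x))) -
         (Real.negMulLog x + Real.negMulLog (1 - x)))) =
      (Real.sin θ ^ 4 * Real.log (Real.sin θ ^ 2) -
        Real.cos θ ^ 4 * Real.log (Real.cos θ ^ 2)) /
        (Real.cos θ ^ 2 - Real.sin θ ^ 2) := by
  have hint : ∀ f : ℝ → ℝ, Continuous f → IntervalIntegrable f volume 0 1 :=
    fun f hf => hf.intervalIntegrable 0 1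
  rw [intervalIntegral.integral_sub (hint _ (by fun_prop)) (hint _ (by fun_prop)),
    intervalIntegral.integral_add (hint _ (by fun_prop)) (hint _ (by fun_prop)),
    intervalIntegral.integral_add (hint _ (by fun_prop)) (hint _ (by fun_prop))]
  rw [integral_negMulLog_affine_eq_slope h.symm, integral_negMulLog_affine_eq_slope h, slope_comm,
    ← two_mul, two_mul_slope_negMulLogAntideriv (cos_sq_add_sin_sq θ) h,
    intervalIntegral.integral_comp_sub_left, sub_self, sub_zero, integral_negMulLog]
  simp only [negMulLogAntideriv, log_one, log_zero]
  ring
end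

section
/- (Example: partial swap on two qubits.) Let t ∈ (0,1) with t ≠ 1/2, and let U_t be the 4×4 unitary √t·I₄ + i√(1−t)·S, where S is the two-qubit swap operator; B(U_t) has rows (1,0,0,0), (0,t,1−t,0), (0,1−t,t,0), (0,0,0,1). Then the coherence generating power of U_t satisfies 3! ∫_{T} [H(λ_1, tλ_2+(1−t)λ_3, (1−t)λ_2+tλ_3, λ_4) − H(λ_1, λ_2, λ_3, λ_4)] dλ_1 dλ_2 dλ_3 = (t² ln t − (1−t)² ln(1−t)) / (2(1−2t)), where T = {(λ_1,λ_2,λ_3) ∈ ℝ³ : λ_j ≥ 0, λ_1+λ_2+λ_3 ≤ 1} and λ_4 = 1 − λ_1 − λ_2 − λ_3. -/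
open MeasureTheory Real

noncomputable def E3 : (Fin 3 → ℝ) ≃ᵐ ℝ × (ℝ × ℝ) :=
  (MeasurableEquiv.piFinSuccAbove (fun _ : Fin 3 => ℝ) 0).trans
    ((MeasurableEquiv.refl ℝ).prodCongr (MeasurableEquiv.finTwoArrow))

lemma E3_symm_apply (a b c : ℝ) : E3.symm (a, (b, c)) = ![a, b, c] := by
  ext i
  fin_cases i <;>
    simp [E3, MeasurableEquiv.piFinSuccAbove, MeasurableEquiv.finTwoArrow,
      MeasurableEquiv.piFinTwo, MeasurableEquiv.trans, MeasurableEquiv.prodCongr,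
      MeasurableEquiv.symm] <;> rfl

lemma E3_mp : MeasurePreserving E3.symm volume volume :=
  ((volume_preserving_piFinSuccAbove (fun _ : Fin 3 => ℝ) 0).trans
    ((MeasurePreserving.id volume).prod (volume_preserving_finTwoArrow ℝ))).symm E3

lemma simplex3_reduce (G : ℝ → ℝ → ℝ) (hG : Continuous (fun p : ℝ × ℝ => G p.1 p.2)) :
    ∫ x in {x : Fin 3 → ℝ | (∀ j, 0 ≤ x j) ∧ x 0 + x 1 + x 2 ≤ 1}, G (x 1) (x 2) =
    ∫ a in (0:ℝ)..1, ∫ b in (0:ℝ)..(1-a), (1 - a - b) * G a b := by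
  set S : Set (Fin 3 → ℝ) := {x | (∀ j, 0 ≤ x j) ∧ x 0 + x 1 + x 2 ≤ 1} with hS
  set S' : Set (ℝ × ℝ × ℝ) :=
    {z | 0 ≤ z.1 ∧ 0 ≤ z.2.1 ∧ 0 ≤ z.2.2 ∧ z.1 + z.2.1 + z.2.2 ≤ 1} with hS'
  have hS'closed : IsClosed S' := by
    rw [hS']
    simp only [Set.setOf_and]
    exact (isClosed_le continuous_const continuous_fst).inter
      ((isClosed_le continuous_const (continuous_fst.comp continuous_snd)).inter
      ((isClosed_le continuous_const (continuous_snd.comp continuous_snd)).inter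
      (isClosed_le (by fun_prop) continuous_const)))
  have hS'cpt : IsCompact S' := by
    refine (isCompact_Icc (a := ((0:ℝ),(0:ℝ),(0:ℝ))) (b := ((1:ℝ),(1:ℝ),(1:ℝ)))).of_isClosed_subset
      hS'closed ?_
    rintro ⟨a,b,c⟩ ⟨h1,h2,h3,h4⟩
    simp only [Set.mem_Icc, Prod.mk_le_mk]
    refine ⟨⟨h1, h2, h3⟩, by linarith, by linarith, by linarith⟩
  have hpre : E3.symm ⁻¹' S = S' := by
    ext ⟨a, b, c⟩
    simp only [Set.mem_preimage, E3_symm_apply, hS, hS', Set.mem_setOf_eq]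
    constructor
    · rintro ⟨h1, h2⟩
      refine ⟨h1 0, h1 1, h1 2, by simpa using h2⟩
    · rintro ⟨h1, h2, h3, h4⟩
      refine ⟨fun j => ?_, by simpa using h4⟩
      fin_cases j <;> simpa
  have step1 : ∫ x in S, G (x 1) (x 2) = ∫ z in S', G z.2.1 z.2.2 := by
    rw [← MeasurePreserving.setIntegral_preimage_emb E3_mp
      E3.symm.measurableEmbedding (fun x => G (x 1) (x 2)) S, hpre]
    have : (fun z : ℝ × ℝ × ℝ => G (E3.symm z 1) (E3.symm z 2)) =
        fun z : ℝ × ℝ × ℝ => G z.2.1 z.2.2 := funext fun ⟨a,b,c⟩ => by simp [E3_symm_apply]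
    rw [this]
  rw [step1]
  have hFcont : Continuous (fun z : ℝ × ℝ × ℝ => G z.2.1 z.2.2) := hG.comp continuous_snd
  have hS'meas := hS'closed.measurableSet
  have hInt : Integrable (S'.indicator fun z : ℝ × ℝ × ℝ => G z.2.1 z.2.2) volume :=
    (integrable_indicator_iff hS'meas).2 (hFcont.continuousOn.integrableOn_compact hS'cpt)
  rw [← integral_indicator hS'meas]
  rw [Measure.volume_eq_prod] at hInt ⊢
  rw [integral_prod_symm _ hInt]
  -- inner integral over first coordinate
  set T : Set (ℝ × ℝ) := {y | 0 ≤ y.1 ∧ 0 ≤ y.2 ∧ y.1 + y.2 ≤ 1} with hT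
  have hTclosed : IsClosed T := by
    rw [hT]
    simp only [Set.setOf_and]
    exact (isClosed_le continuous_const continuous_fst).inter
      ((isClosed_le continuous_const continuous_snd).inter
      (isClosed_le (by fun_prop) continuous_const))
  have hTcpt : IsCompact T := by
    refine (isCompact_Icc (a := ((0:ℝ),(0:ℝ))) (b := ((1:ℝ),(1:ℝ)))).of_isClosed_subset
      hTclosed ?_
    rintro ⟨b,c⟩ ⟨h1,h2,h3⟩
    simp only [Set.mem_Icc, Prod.mk_le_mk]
    exact ⟨⟨h1, h2⟩, by linarith, by linarith⟩
  have hinner : ∀ y : ℝ × ℝ,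
      (∫ x : ℝ, S'.indicator (fun z : ℝ × ℝ × ℝ => G z.2.1 z.2.2) (x, y)) =
      T.indicator (fun y : ℝ × ℝ => (1 - y.1 - y.2) * G y.1 y.2) y := by
    rintro ⟨b, c⟩
    by_cases hy : 0 ≤ b ∧ 0 ≤ c ∧ b + c ≤ 1
    · obtain ⟨hb, hc, hbc⟩ := hy
      have key : (fun x : ℝ => S'.indicator (fun z : ℝ × ℝ × ℝ => G z.2.1 z.2.2) (x, (b, c)))
          = (Set.Icc (0:ℝ) (1 - b - c)).indicator (fun _ => G b c) := by
        funext x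
        have hiff : ((x, (b, c)) ∈ S') ↔ (x ∈ Set.Icc (0:ℝ) (1 - b - c)) := by
          simp only [hS', Set.mem_setOf_eq, Set.mem_Icc]
          constructor
          · rintro ⟨h1, _, _, h4⟩; exact ⟨h1, by linarith⟩
          · rintro ⟨h1, h2⟩; exact ⟨h1, hb, hc, by linarith⟩
        rw [Set.indicator_apply, Set.indicator_apply, if_congr hiff rfl rfl]
      rw [key, integral_indicator_const _ measurableSet_Icc,
        Set.indicator_of_mem (by exact ⟨hb, hc, hbc⟩), Real.volume_real_Icc_of_le (by linarith), smul_eq_mul]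
      ring
    · have hnot : ((b, c) : ℝ × ℝ) ∉ T := hy
      rw [Set.indicator_of_notMem hnot]
      have : (fun x : ℝ => S'.indicator (fun z : ℝ × ℝ × ℝ => G z.2.1 z.2.2) (x, (b, c)))
          = fun _ => 0 := by
        funext x
        refine Set.indicator_of_notMem ?_ _
        rintro ⟨h1, h2, h3, h4⟩
        exact hy ⟨h2, h3, by linarith⟩
      rw [this, integral_zero]
  simp only [hinner]
  -- now the double integral over T
  have hHcont : Continuous (fun y : ℝ × ℝ => (1 - y.1 - y.2) * G y.1 y.2) := by
    exact ((continuous_const.sub continuous_fst).sub continuous_snd).mul hG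
  have hInt2 : Integrable (T.indicator fun y : ℝ × ℝ => (1 - y.1 - y.2) * G y.1 y.2)
      ((volume : Measure ℝ).prod volume) := by
    rw [← Measure.volume_eq_prod]
    exact (integrable_indicator_iff hTclosed.measurableSet).2
      (hHcont.continuousOn.integrableOn_compact hTcpt)
  rw [Measure.volume_eq_prod, integral_prod _ hInt2]
  have hinner2 : ∀ a : ℝ,
      (∫ c : ℝ, T.indicator (fun y : ℝ × ℝ => (1 - y.1 - y.2) * G y.1 y.2) (a, c)) =
      (Set.Icc (0:ℝ) 1).indicator
        (fun a => ∫ b in (0:ℝ)..(1-a), (1 - a - b) * G a b) a := by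
    intro a
    by_cases ha : 0 ≤ a ∧ a ≤ 1
    · obtain ⟨ha0, ha1⟩ := ha
      have key : (fun c : ℝ => T.indicator (fun y : ℝ × ℝ => (1 - y.1 - y.2) * G y.1 y.2) (a, c))
          = (Set.Icc (0:ℝ) (1 - a)).indicator (fun c => (1 - a - c) * G a c) := by
        funext c
        have hiff : ((a, c) ∈ T) ↔ (c ∈ Set.Icc (0:ℝ) (1 - a)) := by
          simp only [hT, Set.mem_setOf_eq, Set.mem_Icc]
          constructor
          · rintro ⟨_, h2, h3⟩; exact ⟨h2, by linarith⟩
          · rintro ⟨h1, h2⟩; exact ⟨ha0, h1, by linarith⟩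
        rw [Set.indicator_apply, Set.indicator_apply, if_congr hiff rfl rfl]
      rw [key, integral_indicator measurableSet_Icc,
        Set.indicator_of_mem (Set.mem_Icc.2 ⟨ha0, ha1⟩),
        integral_Icc_eq_integral_Ioc, ← intervalIntegral.integral_of_le (by linarith)]
    · rw [Set.indicator_of_notMem (by simpa [Set.mem_Icc] using ha)]
      have : (fun c : ℝ => T.indicator (fun y : ℝ × ℝ => (1 - y.1 - y.2) * G y.1 y.2) (a, c))
          = fun _ => 0 := by
        funext c
        refine Set.indicator_of_notMem ?_ _
        rintro ⟨h1, h2, h3⟩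
        exact ha ⟨h1, by linarith⟩
      rw [this, integral_zero]
  simp only [hinner2]
  rw [integral_indicator measurableSet_Icc, integral_Icc_eq_integral_Ioc,
    ← intervalIntegral.integral_of_le (by norm_num : (0:ℝ) ≤ 1)]


lemma ftcL {L : ℝ} (hL : 0 ≤ L) {f F : ℝ → ℝ}
    (hcont : ContinuousOn F (Set.Icc 0 L))
    (hderiv : ∀ x ∈ Set.Ioo (0:ℝ) L, HasDerivAt F (f x) x)
    (hint : IntervalIntegrable f volume 0 L) :
    ∫ a in (0:ℝ)..L, f a = F L - F 0 :=
  intervalIntegral.integral_eq_sub_of_hasDeriv_right_of_le hL hcont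
    (fun x hx => (hderiv x hx).hasDerivWithinAt) hint

lemma cont_mul_log : Continuous (fun x : ℝ => x * Real.log x) := by
  have : (fun x : ℝ => x * Real.log x) = fun x => -Real.negMulLog x := by
    funext x; simp [Real.negMulLog]
  rw [this]; exact Real.continuous_negMulLog.neg

lemma piece1 (p q L : ℝ) (hp : 0 < p) (hq : 0 < q) (hL : 0 ≤ L) :
    ∫ b in (0:ℝ)..L, (L - b) * Real.negMulLog (p + q*b) =
    (1/q^2) * ( -((p+q*L)^3) * Real.log (p+q*L)/6 + 5*(p+q*L)^3/36
      - ((p+q*L)*p/2 - p^2/3) * Real.negMulLog p - (p+q*L)*p^2/4 + p^3/9 ) := by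
  have hpos : ∀ b ∈ Set.uIcc (0:ℝ) L, 0 < p + q*b := by
    intro b hb
    rw [Set.uIcc_of_le hL] at hb
    nlinarith [hb.1]
  set F : ℝ → ℝ := fun b : ℝ => -(1/q^2)*( (p+q*L)*(p+q*b)^2/2*Real.log (p+q*b)
        - (p+q*L)*(p+q*b)^2/4 - (p+q*b)^3/3*Real.log (p+q*b) + (p+q*b)^3/9 ) with hF
  have key : ∫ b in (0:ℝ)..L, (L - b) * Real.negMulLog (p + q*b) = F L - F 0 := by
    apply intervalIntegral.integral_eq_sub_of_hasDerivAt
    · intro b hb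
      have hu : 0 < p + q*b := hpos b hb
      have h1 : HasDerivAt (fun b : ℝ => p + q*b) q b := by
        simpa using ((hasDerivAt_id b).const_mul q).const_add p
      have hlog : HasDerivAt (fun b : ℝ => Real.log (p+q*b)) (q/(p+q*b)) b := by
        simpa using h1.log (ne_of_gt hu)
      have hsq : HasDerivAt (fun b : ℝ => (p+q*b)^2) (2*(p+q*b)*q) b := by
        simpa using h1.fun_pow 2
      have hcb : HasDerivAt (fun b : ℝ => (p+q*b)^3) (3*(p+q*b)^2*q) b := by
        simpa using h1.fun_pow 3
      have h2 : HasDerivAt (fun b : ℝ => (p+q*L)*(p+q*b)^2/2*Real.log (p+q*b))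
          ((p+q*L)*(2*(p+q*b)*q)/2*Real.log (p+q*b) + (p+q*L)*(p+q*b)^2/2*(q/(p+q*b))) b := by
        have := (((hsq.const_mul (p+q*L)).div_const 2).mul hlog)
        refine this.congr_deriv ?_ <;> ring
      have h3 : HasDerivAt (fun b : ℝ => (p+q*L)*(p+q*b)^2/4)
          ((p+q*L)*(2*(p+q*b)*q)/4) b := (hsq.const_mul (p+q*L)).div_const 4
      have h4 : HasDerivAt (fun b : ℝ => (p+q*b)^3/3*Real.log (p+q*b))
          ((3*(p+q*b)^2*q)/3*Real.log (p+q*b) + (p+q*b)^3/3*(q/(p+q*b))) b :=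
        (hcb.div_const 3).mul hlog
      have h5 : HasDerivAt (fun b : ℝ => (p+q*b)^3/9) ((3*(p+q*b)^2*q)/9) b :=
        hcb.div_const 9
      have := (((h2.sub h3).sub h4).add h5).const_mul (-(1/q^2))
      refine this.congr_deriv ?_
      have hu' : (p+q*b) ≠ 0 := ne_of_gt hu
      simp only [Real.negMulLog]
      field_simp
      ring
    · apply Continuous.intervalIntegrable
      have : Continuous (fun b : ℝ => Real.negMulLog (p + q*b)) :=
        Real.continuous_negMulLog.comp (by continuity)
      exact (continuous_const.sub continuous_id).mul this
  rw [key, hF]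
  simp only [mul_zero, add_zero, Real.negMulLog]
  ring

lemma piece3 (L : ℝ) (hL : 0 ≤ L) :
    ∫ b in (0:ℝ)..L, (L - b) * Real.negMulLog b =
    L^2 * Real.negMulLog L/6 + 5*L^3/36 := by
  set F : ℝ → ℝ := fun b : ℝ => L*b*Real.negMulLog b/2 + L*b^2/4 - b^2*Real.negMulLog b/3 - b^3/9 with hF
  have key : ∫ b in (0:ℝ)..L, (L - b) * Real.negMulLog b = F L - F 0 := by
    apply ftcL hL
    · fun_prop
    · intro x hx
      have hne : x ≠ 0 := ne_of_gt hx.1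
      have hnm := Real.hasDerivAt_negMulLog hne
      have h1 : HasDerivAt (fun b : ℝ => L*b*Real.negMulLog b/2)
          ((L*Real.negMulLog x + L*x*(-Real.log x - 1))/2) x := by
        have := (((hasDerivAt_id x).const_mul L).mul hnm).div_const 2
        refine this.congr_deriv ?_ <;> (simp only [id_eq]; ring)
      have h2 : HasDerivAt (fun b : ℝ => L*b^2/4) (L*(2*x)/4) x := by
        have := ((hasDerivAt_pow 2 x).const_mul L).div_const 4
        refine this.congr_deriv ?_ <;> (norm_num; try ring)
      have h3 : HasDerivAt (fun b : ℝ => b^2*Real.negMulLog b/3)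
          ((2*x*Real.negMulLog x + x^2*(-Real.log x - 1))/3) x := by
        have := ((hasDerivAt_pow 2 x).mul hnm).div_const 3
        refine this.congr_deriv ?_ <;> (norm_num; try ring)
      have h4 : HasDerivAt (fun b : ℝ => b^3/9) (3*x^2/9) x := by
        have := (hasDerivAt_pow 3 x).div_const 9
        refine this.congr_deriv ?_ <;> (norm_num; try ring)
      have := ((h1.add h2).sub h3).sub h4
      refine this.congr_deriv ?_
      simp only [Real.negMulLog]
      ring
    · apply Continuous.intervalIntegrable
      exact (continuous_const.sub continuous_id).mul Real.continuous_negMulLog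
  rw [key, hF]
  simp only [Real.negMulLog]
  ring

noncomputable def Wfun (t a : ℝ) : ℝ :=
  (1/(1-t)^2) * ( -((t*a+(1-t)*(1-a))^3) * Real.log (t*a+(1-t)*(1-a))/6
    + 5*(t*a+(1-t)*(1-a))^3/36
    - ((t*a+(1-t)*(1-a))*(t*a)/2 - (t*a)^2/3) * Real.negMulLog (t*a)
    - (t*a+(1-t)*(1-a))*(t*a)^2/4 + (t*a)^3/9 )
  + (1/t^2) * ( -(((1-t)*a+t*(1-a))^3) * Real.log ((1-t)*a+t*(1-a))/6
    + 5*((1-t)*a+t*(1-a))^3/36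
    - (((1-t)*a+t*(1-a))*((1-t)*a)/2 - ((1-t)*a)^2/3) * Real.negMulLog ((1-t)*a)
    - ((1-t)*a+t*(1-a))*((1-t)*a)^2/4 + ((1-t)*a)^3/9 )
  - ( (1-a)^2 * Real.negMulLog (1-a)/6 + 5*(1-a)^3/36 )
  - Real.negMulLog a * (1-a)^2/2

lemma inner_eval (t a : ℝ) (ht0 : 0 < t) (ht1 : t < 1) (ha0 : 0 < a) (ha1 : a < 1) :
    ∫ b in (0:ℝ)..(1-a), (1-a-b) *
      (Real.negMulLog (t*a+(1-t)*b) + Real.negMulLog ((1-t)*a+t*b)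
        - Real.negMulLog a - Real.negMulLog b) = Wfun t a := by
  have hL : (0:ℝ) ≤ 1 - a := by linarith
  have h1 : IntervalIntegrable (fun b : ℝ => (1-a-b) * Real.negMulLog (t*a+(1-t)*b))
      volume 0 (1-a) := (Continuous.intervalIntegrable (by fun_prop) _ _)
  have h2 : IntervalIntegrable (fun b : ℝ => (1-a-b) * Real.negMulLog ((1-t)*a+t*b))
      volume 0 (1-a) := (Continuous.intervalIntegrable (by fun_prop) _ _)
  have h3 : IntervalIntegrable (fun b : ℝ => (1-a-b) * Real.negMulLog b)
      volume 0 (1-a) := (Continuous.intervalIntegrable (by fun_prop) _ _)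
  have h4 : IntervalIntegrable (fun b : ℝ => Real.negMulLog a * (1-a-b))
      volume 0 (1-a) := (Continuous.intervalIntegrable (by fun_prop) _ _)
  have hsplit : (fun b : ℝ => (1-a-b) *
      (Real.negMulLog (t*a+(1-t)*b) + Real.negMulLog ((1-t)*a+t*b)
        - Real.negMulLog a - Real.negMulLog b)) =
      fun b : ℝ => ((1-a-b) * Real.negMulLog (t*a+(1-t)*b) +
        (1-a-b) * Real.negMulLog ((1-t)*a+t*b) - (1-a-b) * Real.negMulLog b)
        - Real.negMulLog a * (1-a-b) := by
    funext b; ring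
  rw [hsplit, intervalIntegral.integral_sub ((h1.add h2).sub h3) h4,
    intervalIntegral.integral_sub (h1.add h2) h3, intervalIntegral.integral_add h1 h2]
  have e1 := piece1 (t*a) (1-t) (1-a) (by positivity) (by linarith) hL
  have e2 := piece1 ((1-t)*a) t (1-a) (mul_pos (by linarith) ha0) ht0 hL
  have e3 := piece3 (1-a) hL
  have e4 : ∫ b in (0:ℝ)..(1-a), Real.negMulLog a * (1-a-b) =
      Real.negMulLog a * ((1-a)^2/2) := by
    rw [intervalIntegral.integral_const_mul]
    congr 1
    have : (fun b : ℝ => 1-a-b) = fun b : ℝ => (1-a) - b := by funext b; ring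
    rw [intervalIntegral.integral_sub (intervalIntegrable_const) intervalIntegral.intervalIntegrable_id,
      intervalIntegral.integral_const, integral_id]
    simp only [smul_eq_mul]
    ring
  have e1' : ∫ b in (0:ℝ)..(1-a), (1-a-b) * Real.negMulLog (t*a+(1-t)*b) =
      (1/(1-t)^2) * ( -((t*a+(1-t)*(1-a))^3) * Real.log (t*a+(1-t)*(1-a))/6
        + 5*(t*a+(1-t)*(1-a))^3/36
        - ((t*a+(1-t)*(1-a))*(t*a)/2 - (t*a)^2/3) * Real.negMulLog (t*a)
        - (t*a+(1-t)*(1-a))*(t*a)^2/4 + (t*a)^3/9 ) := e1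
  have e2' : ∫ b in (0:ℝ)..(1-a), (1-a-b) * Real.negMulLog ((1-t)*a+t*b) =
      (1/t^2) * ( -(((1-t)*a+t*(1-a))^3) * Real.log ((1-t)*a+t*(1-a))/6
        + 5*((1-t)*a+t*(1-a))^3/36
        - (((1-t)*a+t*(1-a))*((1-t)*a)/2 - ((1-t)*a)^2/3) * Real.negMulLog ((1-t)*a)
        - ((1-t)*a+t*(1-a))*((1-t)*a)^2/4 + ((1-t)*a)^3/9 ) := e2
  rw [e1', e2', e3, e4, Wfun]
  ring

lemma intM (p q : ℝ) (hq : q ≠ 0) (hpos : ∀ a ∈ Set.Icc (0:ℝ) 1, 0 < p + q*a) :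
    ∫ a in (0:ℝ)..1, (p+q*a)^3 * Real.log (p+q*a) =
    ((p+q)^4/4*Real.log (p+q) - (p+q)^4/16 - p^4/4*Real.log p + p^4/16)/q := by
  set F : ℝ → ℝ := fun a : ℝ => ((p+q*a)^4/4*Real.log (p+q*a) - (p+q*a)^4/16)/q with hF
  have key : ∫ a in (0:ℝ)..1, (p+q*a)^3 * Real.log (p+q*a) = F 1 - F 0 := by
    apply intervalIntegral.integral_eq_sub_of_hasDerivAt
    · intro a ha
      rw [Set.uIcc_of_le zero_le_one] at ha
      have hu : 0 < p + q*a := hpos a ha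
      have h1 : HasDerivAt (fun a : ℝ => p + q*a) q a := by
        simpa using ((hasDerivAt_id a).const_mul q).const_add p
      have hlog : HasDerivAt (fun a : ℝ => Real.log (p+q*a)) (q/(p+q*a)) a := by
        simpa using h1.log (ne_of_gt hu)
      have hp4 : HasDerivAt (fun a : ℝ => (p+q*a)^4) (4*(p+q*a)^3*q) a := by
        simpa using h1.fun_pow 4
      have := ((((hp4.div_const 4).mul hlog).sub (hp4.div_const 16)).div_const q)
      refine this.congr_deriv ?_
      field_simp
      ring
    · apply ContinuousOn.intervalIntegrable
      rw [Set.uIcc_of_le zero_le_one]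
      have hcl : ContinuousOn (fun a : ℝ => Real.log (p+q*a)) (Set.Icc 0 1) :=
        ContinuousOn.log (by fun_prop) (fun a ha => ne_of_gt (hpos a ha))
      exact (ContinuousOn.pow (by fun_prop) 3).mul hcl
  rw [key, hF]
  simp only [mul_one, mul_zero, add_zero]
  ring

lemma intK1 : ∫ a in (0:ℝ)..1, a * Real.log a = -(1/4) := by
  set F : ℝ → ℝ := fun a : ℝ => -(a/2)*Real.negMulLog a - a^2/4 with hF
  have key : ∫ a in (0:ℝ)..1, a * Real.log a = F 1 - F 0 := by
    apply ftcL zero_le_one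
    · fun_prop
    · intro x hx
      have hnm := Real.hasDerivAt_negMulLog (ne_of_gt hx.1)
      have := ((((hasDerivAt_id x).div_const 2).neg.mul hnm).sub ((hasDerivAt_pow 2 x).div_const 4))
      refine this.congr_deriv ?_
      simp only [Real.negMulLog, id_eq, Pi.neg_apply]
      push_cast
      ring
    · exact cont_mul_log.intervalIntegrable _ _
  rw [key, hF]
  simp [Real.negMulLog]

lemma intK2 : ∫ a in (0:ℝ)..1, a^2 * Real.log a = -(1/9) := by
  set F : ℝ → ℝ := fun a : ℝ => -(a^2/3)*Real.negMulLog a - a^3/9 with hF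
  have key : ∫ a in (0:ℝ)..1, a^2 * Real.log a = F 1 - F 0 := by
    apply ftcL zero_le_one
    · fun_prop
    · intro x hx
      have hnm := Real.hasDerivAt_negMulLog (ne_of_gt hx.1)
      have := ((((hasDerivAt_pow 2 x).div_const 3).neg.mul hnm).sub ((hasDerivAt_pow 3 x).div_const 9))
      refine this.congr_deriv ?_
      simp only [Real.negMulLog, Pi.neg_apply]
      push_cast
      ring
    · have : Continuous (fun a : ℝ => a^2 * Real.log a) := by
        have : (fun a : ℝ => a^2 * Real.log a) = fun a => a * (a * Real.log a) := by
          funext a; ring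
        rw [this]; exact continuous_id.mul cont_mul_log
      exact this.intervalIntegrable _ _
  rw [key, hF]
  simp [Real.negMulLog]

lemma intK3 : ∫ a in (0:ℝ)..1, a^3 * Real.log a = -(1/16) := by
  set F : ℝ → ℝ := fun a : ℝ => -(a^3/4)*Real.negMulLog a - a^4/16 with hF
  have key : ∫ a in (0:ℝ)..1, a^3 * Real.log a = F 1 - F 0 := by
    apply ftcL zero_le_one
    · fun_prop
    · intro x hx
      have hnm := Real.hasDerivAt_negMulLog (ne_of_gt hx.1)
      have := ((((hasDerivAt_pow 3 x).div_const 4).neg.mul hnm).sub ((hasDerivAt_pow 4 x).div_const 16))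
      refine this.congr_deriv ?_
      simp only [Real.negMulLog, Pi.neg_apply]
      push_cast
      ring
    · have : Continuous (fun a : ℝ => a^3 * Real.log a) := by
        have : (fun a : ℝ => a^3 * Real.log a) = fun a => a * (a * (a * Real.log a)) := by
          funext a; ring
        rw [this]; exact continuous_id.mul (continuous_id.mul cont_mul_log)
      exact this.intervalIntegrable _ _
  rw [key, hF]
  simp [Real.negMulLog]

lemma intN : ∫ a in (0:ℝ)..1, (1-a)^3 * Real.log (1-a) = -(1/16) := by
  set F : ℝ → ℝ := fun a : ℝ => (1-a)^3*Real.negMulLog (1-a)/4 + (1-a)^4/16 with hF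
  have key : ∫ a in (0:ℝ)..1, (1-a)^3 * Real.log (1-a) = F 1 - F 0 := by
    apply ftcL zero_le_one
    · fun_prop
    · intro x hx
      have hne : 1 - x ≠ 0 := by have := hx.2; intro h; linarith [sub_eq_zero.mp h]
      have h1 : HasDerivAt (fun a : ℝ => 1 - a) (-1) x := by
        simpa using (hasDerivAt_id x).const_sub 1
      have hnm : HasDerivAt (fun a : ℝ => Real.negMulLog (1-a))
          ((-Real.log (1-x) - 1) * (-1)) x :=
        (Real.hasDerivAt_negMulLog hne).comp x h1
      have hp3 : HasDerivAt (fun a : ℝ => (1-a)^3) (3*(1-x)^2*(-1)) x := by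
        simpa using h1.fun_pow 3
      have hp4 : HasDerivAt (fun a : ℝ => (1-a)^4) (4*(1-x)^3*(-1)) x := by
        simpa using h1.fun_pow 4
      have := (((hp3.mul hnm).div_const 4).add (hp4.div_const 16))
      refine this.congr_deriv ?_
      simp only [Real.negMulLog]
      ring
    · have : Continuous (fun a : ℝ => (1-a)^3 * Real.log (1-a)) := by
        have : (fun a : ℝ => (1-a)^3 * Real.log (1-a)) =
            fun a => (1-a)^2 * ((1-a) * Real.log (1-a)) := by
          funext a; ring
        rw [this]
        exact ((continuous_const.sub continuous_id).pow 2).mul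
          (cont_mul_log.comp (continuous_const.sub continuous_id))
      exact this.intervalIntegrable _ _
  rw [key, hF]
  simp [Real.negMulLog]

lemma intPoly (c1 c2 c3 : ℝ) :
    ∫ a in (0:ℝ)..1, (c1*a + c2*a^2 + c3*a^3) = c1/2 + c2/3 + c3/4 := by
  set F : ℝ → ℝ := fun a : ℝ => c1*a^2/2 + c2*a^3/3 + c3*a^4/4 with hF
  have key : ∫ a in (0:ℝ)..1, (c1*a + c2*a^2 + c3*a^3) = F 1 - F 0 := by
    apply intervalIntegral.integral_eq_sub_of_hasDerivAt
    · intro a _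
      have h2 : HasDerivAt (fun a : ℝ => c1*a^2/2) (c1*(2*a)/2) a :=
        ((hasDerivAt_pow 2 a).const_mul c1).div_const 2 |>.congr_deriv (by push_cast; ring)
      have h3 : HasDerivAt (fun a : ℝ => c2*a^3/3) (c2*(3*a^2)/3) a :=
        ((hasDerivAt_pow 3 a).const_mul c2).div_const 3 |>.congr_deriv (by push_cast; ring)
      have h4 : HasDerivAt (fun a : ℝ => c3*a^4/4) (c3*(4*a^3)/4) a :=
        ((hasDerivAt_pow 4 a).const_mul c3).div_const 4 |>.congr_deriv (by push_cast; ring)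
      exact ((h2.add h3).add h4).congr_deriv (by ring)
    · exact (Continuous.intervalIntegrable (by fun_prop) _ _)
  rw [key, hF]
  norm_num

set_option maxHeartbeats 2000000 in
lemma outer_eval (t : ℝ) (ht0 : 0 < t) (ht1 : t < 1) (htd : t ≠ 1/2) :
    ∫ a in (0:ℝ)..1, Wfun t a =
    (t^2*Real.log t - (1-t)^2*Real.log (1-t))/(12*(1-2*t)) := by
  have hs0 : (0:ℝ) < 1 - t := by linarith
  have ht0' : t ≠ 0 := ne_of_gt ht0
  have hs0' : (1:ℝ) - t ≠ 0 := ne_of_gt hs0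
  have hq1 : 2*t - 1 ≠ 0 := by intro h; apply htd; linarith
  have hq2 : 1 - 2*t ≠ 0 := by intro h; apply htd; linarith
  have hpos1 : ∀ a ∈ Set.Icc (0:ℝ) 1, 0 < (1-t) + (2*t-1)*a := by
    rintro a ⟨h0, h1⟩
    rcases le_or_gt 0 (2*t-1) with h | h
    · nlinarith [mul_nonneg h h0]
    · nlinarith [mul_nonneg (le_of_lt (neg_pos.2 h)) (by linarith : (0:ℝ) ≤ 1 - a)]
  have hpos2 : ∀ a ∈ Set.Icc (0:ℝ) 1, 0 < t + (1-2*t)*a := by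
    rintro a ⟨h0, h1⟩
    rcases le_or_gt 0 (1-2*t) with h | h
    · nlinarith [mul_nonneg h h0]
    · nlinarith [mul_nonneg (le_of_lt (neg_pos.2 h)) (by linarith : (0:ℝ) ≤ 1 - a)]
  set A1 : ℝ := -(1/(6*(1-t)^2)) with hA1
  set A2 : ℝ := -(1/(6*t^2)) with hA2
  set A4 : ℝ := t^2/(2*(1-t)) + (1-t)^2/(2*t) - 1 with hA4
  set A5 : ℝ := (t^2*(2*t-1)/2 - t^3/3)/(1-t)^2 + ((1-t)^2*(1-2*t)/2 - (1-t)^3/3)/t^2 + 1/2 with hA5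
  set C1 : ℝ := (15*t^2-30*t^3+15*t^4)/(36*t^2*(1-t)^2) with hC1
  set C2 : ℝ := (6*t-54*t^2+96*t^3-48*t^4
    + Real.log (1-t)*(18*t-72*t^2+108*t^3-72*t^4+18*t^5)
    + Real.log t*(18*t^4-18*t^5))/(36*t^2*(1-t)^2) with hC2
  set C3 : ℝ := (-6*t+39*t^2-66*t^3+33*t^4
    + Real.log (1-t)*(6-48*t+132*t^2-168*t^3+102*t^4-24*t^5)
    + Real.log t*(-18*t^4+24*t^5))/(36*t^2*(1-t)^2) with hC3
  have hcong : ∫ a in (0:ℝ)..1, Wfun t a = ∫ a in (0:ℝ)..1,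
      (A1 * (((1-t)+(2*t-1)*a)^3 * Real.log ((1-t)+(2*t-1)*a))
       + A2 * ((t+(1-2*t)*a)^3 * Real.log (t+(1-2*t)*a))
       + (1/2) * (a * Real.log a)
       + A4 * (a^2 * Real.log a)
       + A5 * (a^3 * Real.log a)
       + (1/6) * ((1-a)^3 * Real.log (1-a))
       + (C1*a + C2*a^2 + C3*a^3)) := by
    apply intervalIntegral.integral_congr_ae
    have hone : ∀ᵐ x : ℝ ∂volume, x ≠ 1 := by
      rw [ae_iff]
      push_neg
      simp [Set.setOf_eq_eq_singleton]
    filter_upwards [hone] with x hx hmem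
    rw [Set.uIoc_of_le zero_le_one] at hmem
    have hx0 : 0 < x := hmem.1
    have hx1 : x < 1 := lt_of_le_of_ne hmem.2 hx
    simp only [Wfun, Real.negMulLog, hA1, hA2, hA4, hA5, hC1, hC2, hC3]
    rw [Real.log_mul ht0' (ne_of_gt hx0), Real.log_mul hs0' (ne_of_gt hx0),
      show t*x+(1-t)*(1-x) = (1-t)+(2*t-1)*x from by ring,
      show (1-t)*x+t*(1-x) = t+(1-2*t)*x from by ring]
    field_simp
    ring
  rw [hcong]
  have hf1 : IntervalIntegrable
      (fun a : ℝ => ((1-t)+(2*t-1)*a)^3 * Real.log ((1-t)+(2*t-1)*a)) volume 0 1 := by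
    apply ContinuousOn.intervalIntegrable
    rw [Set.uIcc_of_le zero_le_one]
    exact (ContinuousOn.pow (by fun_prop) 3).mul
      (ContinuousOn.log (by fun_prop) (fun a ha => ne_of_gt (hpos1 a ha)))
  have hf2 : IntervalIntegrable
      (fun a : ℝ => (t+(1-2*t)*a)^3 * Real.log (t+(1-2*t)*a)) volume 0 1 := by
    apply ContinuousOn.intervalIntegrable
    rw [Set.uIcc_of_le zero_le_one]
    exact (ContinuousOn.pow (by fun_prop) 3).mul
      (ContinuousOn.log (by fun_prop) (fun a ha => ne_of_gt (hpos2 a ha)))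
  have hf3 : IntervalIntegrable (fun a : ℝ => a * Real.log a) volume 0 1 :=
    cont_mul_log.intervalIntegrable _ _
  have hf4 : IntervalIntegrable (fun a : ℝ => a^2 * Real.log a) volume 0 1 := by
    have : (fun a : ℝ => a^2 * Real.log a) = fun a => a * (a * Real.log a) := by
      funext a; ring
    rw [this]; exact (continuous_id.mul cont_mul_log).intervalIntegrable _ _
  have hf5 : IntervalIntegrable (fun a : ℝ => a^3 * Real.log a) volume 0 1 := by
    have : (fun a : ℝ => a^3 * Real.log a) = fun a => a * (a * (a * Real.log a)) := by
      funext a; ring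
    rw [this]; exact (continuous_id.mul (continuous_id.mul cont_mul_log)).intervalIntegrable _ _
  have hf6 : IntervalIntegrable (fun a : ℝ => (1-a)^3 * Real.log (1-a)) volume 0 1 := by
    have : (fun a : ℝ => (1-a)^3 * Real.log (1-a)) =
        fun a => (1-a)^2 * ((1-a) * Real.log (1-a)) := by
      funext a; ring
    rw [this]
    exact (((continuous_const.sub continuous_id).pow 2).mul
      (cont_mul_log.comp (continuous_const.sub continuous_id))).intervalIntegrable _ _
  have hf7 : IntervalIntegrable (fun a : ℝ => C1*a + C2*a^2 + C3*a^3) volume 0 1 :=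
    (Continuous.intervalIntegrable (by fun_prop) _ _)
  rw [intervalIntegral.integral_add
      ((((((hf1.const_mul A1).add (hf2.const_mul A2)).add (hf3.const_mul (1/2))).add
        (hf4.const_mul A4)).add (hf5.const_mul A5)).add (hf6.const_mul (1/6))) hf7,
    intervalIntegral.integral_add
      (((((hf1.const_mul A1).add (hf2.const_mul A2)).add (hf3.const_mul (1/2))).add
        (hf4.const_mul A4)).add (hf5.const_mul A5)) (hf6.const_mul (1/6)),
    intervalIntegral.integral_add
      ((((hf1.const_mul A1).add (hf2.const_mul A2)).add (hf3.const_mul (1/2))).add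
        (hf4.const_mul A4)) (hf5.const_mul A5),
    intervalIntegral.integral_add
      (((hf1.const_mul A1).add (hf2.const_mul A2)).add (hf3.const_mul (1/2)))
        (hf4.const_mul A4),
    intervalIntegral.integral_add
      ((hf1.const_mul A1).add (hf2.const_mul A2)) (hf3.const_mul (1/2)),
    intervalIntegral.integral_add (hf1.const_mul A1) (hf2.const_mul A2),
    intervalIntegral.integral_const_mul, intervalIntegral.integral_const_mul,
    intervalIntegral.integral_const_mul, intervalIntegral.integral_const_mul,
    intervalIntegral.integral_const_mul, intervalIntegral.integral_const_mul,
    intM (1-t) (2*t-1) hq1 hpos1, intM t (1-2*t) hq2 hpos2,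
    intK1, intK2, intK3, intN, intPoly,
    show (1:ℝ)-t+(2*t-1) = t from by ring, show t+(1-2*t) = (1:ℝ)-t from by ring]
  rw [hA1, hA2, hA4, hA5, hC1, hC2, hC3]
  have hq2' : 1 - t*2 ≠ 0 := by intro h; apply hq2; linarith
  have hq1' : t*2 - 1 ≠ 0 := by intro h; apply hq2; linarith
  field_simp
  ring

/-- Example: partial swap on two qubits: the coherence generating power of
the partial swap `U_t` equals `(t² ln t - (1-t)² ln(1-t))/(2(1-2t))`. -/
theorem cgp_partial_swap (t : ℝ) (ht : t ∈ Set.Ioo (0:ℝ) 1) (ht' : t ≠ 1 / 2) :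
    ((3).factorial : ℝ) *
      ∫ x in {x : Fin 3 → ℝ | (∀ j, 0 ≤ x j) ∧ x 0 + x 1 + x 2 ≤ 1},
        ((Real.negMulLog (x 0) + Real.negMulLog (t * x 1 + (1 - t) * x 2) +
          Real.negMulLog ((1 - t) * x 1 + t * x 2) + Real.negMulLog (1 - x 0 - x 1 - x 2)) -
         (Real.negMulLog (x 0) + Real.negMulLog (x 1) + Real.negMulLog (x 2) +
          Real.negMulLog (1 - x 0 - x 1 - x 2))) =
      (t ^ 2 * Real.log t - (1 - t) ^ 2 * Real.log (1 - t)) / (2 * (1 - 2 * t)) := by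
  obtain ⟨ht0, ht1⟩ := ht
  have h0 : (fun x : Fin 3 → ℝ =>
      ((Real.negMulLog (x 0) + Real.negMulLog (t * x 1 + (1 - t) * x 2) +
        Real.negMulLog ((1 - t) * x 1 + t * x 2) + Real.negMulLog (1 - x 0 - x 1 - x 2)) -
       (Real.negMulLog (x 0) + Real.negMulLog (x 1) + Real.negMulLog (x 2) +
        Real.negMulLog (1 - x 0 - x 1 - x 2)))) =
      (fun x : Fin 3 → ℝ =>
        Real.negMulLog (t*(x 1)+(1-t)*(x 2)) + Real.negMulLog ((1-t)*(x 1)+t*(x 2))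
          - Real.negMulLog (x 1) - Real.negMulLog (x 2)) := by
    funext x
    ring
  have hGc : Continuous (fun p : ℝ × ℝ => (fun a b : ℝ =>
      Real.negMulLog (t*a+(1-t)*b) + Real.negMulLog ((1-t)*a+t*b)
        - Real.negMulLog a - Real.negMulLog b) p.1 p.2) := by
    simp only []
    fun_prop
  have hred := simplex3_reduce (fun a b : ℝ =>
    Real.negMulLog (t*a+(1-t)*b) + Real.negMulLog ((1-t)*a+t*b)
      - Real.negMulLog a - Real.negMulLog b) hGc
  rw [h0, hred]
  have hone : ∀ᵐ x : ℝ ∂volume, x ≠ 1 := by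
    rw [ae_iff]
    push_neg
    simp [Set.setOf_eq_eq_singleton]
  have hcong : ∫ a in (0:ℝ)..1, ∫ b in (0:ℝ)..(1-a), (1-a-b) *
      (Real.negMulLog (t*a+(1-t)*b) + Real.negMulLog ((1-t)*a+t*b)
        - Real.negMulLog a - Real.negMulLog b) = ∫ a in (0:ℝ)..1, Wfun t a := by
    apply intervalIntegral.integral_congr_ae
    filter_upwards [hone] with x hx hmem
    rw [Set.uIoc_of_le zero_le_one] at hmem
    have hx0 : 0 < x := hmem.1
    have hx1 : x < 1 := lt_of_le_of_ne hmem.2 hx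
    exact inner_eval t x ht0 ht1 hx0 hx1
  rw [hcong, outer_eval t ht0 ht1 ht']
  have h6 : ((3).factorial : ℝ) = 6 := by norm_num [Nat.factorial]
  rw [h6]
  have hq2 : 1 - 2*t ≠ 0 := by intro h; apply ht'; linarith
  field_simp
  ring
end
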